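/- arXiv:1205.1627 — 9 statements merged into one kernel-verified Lean document; each statement's English description precedes it below -/
import Mathlib

section
/- Every graph with maximum degree Δ admits a decomposition of its edge set into at most ⌈(Δ+1)/2⌉ closed or open walks such that every vertex appears at most ⌈(Δ+1)/2⌉ times in total among the walks. That is, the folded linear arboricity of a graph with maximum degree Δ is at most ⌈(Δ+1)/2⌉. -/
/-!
Instead of splitting an Euler tour, cover the edges greedily by repeatedly removing a longest
trail from the remaining edge set `s`. A longest trail contains every edge of `s` at its two ends,
so a vertex that is an end of it has no edges left afterwards. A trail visiting `v` exactly `c`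
times uses `2c` edges at `v`, minus one for each end equal to `v`. Hence, by induction on `s`,
a vertex with `d > 0` edges in `s` is visited at most `d / 2 + 1 = ⌈(d + 1) / 2⌉` times in total,
and a vertex with `d = 0` never.
-/

open Finset

namespace SimpleGraph

def visitBound (d : ℕ) : ℕ := if d = 0 then 0 else d / 2 + 1

theorem visitBound_le {d Δ : ℕ} (h : d ≤ Δ) : visitBound d ≤ (Δ + 2) / 2 := by
  unfold visitBound
  split_ifs <;> omega

variable {V : Type*} {G : SimpleGraph V}

namespace Walk

def IsTrailIn {u z : V} (W : G.Walk u z) (s : Finset (Sym2 V)) : Prop :=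
  W.IsTrail ∧ ∀ e ∈ W.edges, e ∈ s

def IsLongestTrailIn {u z : V} (W : G.Walk u z) (s : Finset (Sym2 V)) : Prop :=
  W.IsTrailIn s ∧ ∀ ⦃u' z' : V⦄ (W' : G.Walk u' z'), W'.IsTrailIn s → W'.length ≤ W.length

variable {s : Finset (Sym2 V)}

theorem IsTrailIn.length_le_card {u z : V} {W : G.Walk u z} (hW : W.IsTrailIn s) :
    W.length ≤ #s := by
  classical
  rw [← length_edges, ← List.toFinset_card_of_nodup hW.1.edges_nodup]
  exact card_le_card fun e he => hW.2 e (List.mem_toFinset.mp he)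

theorem exists_isLongestTrailIn_length_le {u z : V} {W₀ : G.Walk u z} (h₀ : W₀.IsTrailIn s) :
    ∃ (u' z' : V) (W : G.Walk u' z'), W.IsLongestTrailIn s ∧ W₀.length ≤ W.length := by
  classical
  let P (n : ℕ) : Prop := ∃ (u' z' : V) (W : G.Walk u' z'), W.IsTrailIn s ∧ W.length = n
  have hP₀ : P W₀.length := ⟨u, z, W₀, h₀, rfl⟩
  obtain ⟨u', z', W, hW, hlen⟩ := Nat.findGreatest_spec h₀.length_le_card hP₀
  refine ⟨u', z', W, ⟨hW, fun _ _ W' hW' => ?_⟩, ?_⟩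
  · rw [hlen]
    exact Nat.le_findGreatest hW'.length_le_card ⟨_, _, W', hW', rfl⟩
  · rw [hlen]
    exact Nat.le_findGreatest h₀.length_le_card hP₀

theorem IsLongestTrailIn.reverse {u z : V} {W : G.Walk u z} (hW : W.IsLongestTrailIn s) :
    W.reverse.IsLongestTrailIn s := by
  refine ⟨⟨hW.1.1.reverse, fun e he => hW.1.2 e (by simpa using he)⟩, fun _ _ W' hW' => ?_⟩
  simpa using hW.2 W' hW'

theorem IsLongestTrailIn.mem_edges_of_start_mem {u z : V} {W : G.Walk u z}
    (hW : W.IsLongestTrailIn s) (hs : ↑s ⊆ G.edgeSet) {e : Sym2 V} (he : e ∈ s) (hu : u ∈ e) :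
    e ∈ W.edges := by
  by_contra heW
  obtain ⟨x, rfl⟩ := Sym2.mem_iff_exists.mp hu
  have hadj : G.Adj x u := (G.mem_edgeSet.mp (hs he)).symm
  have hlonger : (Walk.cons hadj W).IsTrailIn s := by
    refine ⟨?_, ?_⟩
    · rw [isTrail_cons, Sym2.eq_swap]
      exact ⟨hW.1.1, heW⟩
    · simp only [edges_cons, List.mem_cons, forall_eq_or_imp]
      exact ⟨Sym2.eq_swap ▸ he, hW.1.2⟩
  simpa using hW.2 _ hlonger

theorem IsLongestTrailIn.mem_edges_of_end_mem {u z : V} {W : G.Walk u z}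
    (hW : W.IsLongestTrailIn s) (hs : ↑s ⊆ G.edgeSet) {e : Sym2 V} (he : e ∈ s) (hz : z ∈ e) :
    e ∈ W.edges := by
  simpa using hW.reverse.mem_edges_of_start_mem hs he hz

variable [DecidableEq V]

theorem two_mul_count_support {u z : V} (W : G.Walk u z) (v : V) :
    2 * W.support.count v = W.edges.countP (v ∈ ·) + [u, z].count v := by
  induction W with
  | @nil a => by_cases h : a = v <;> simp [h]
  | @cons a b c h p ih =>
    have hab := h.ne
    simp only [support_cons, edges_cons, List.count_cons, List.countP_cons, Sym2.mem_iff,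
      List.count_nil] at ih ⊢
    grind

theorem IsTrail.card_filter_toFinset_edges {u z : V} {W : G.Walk u z} (hW : W.IsTrail)
    (p : Sym2 V → Prop) [DecidablePred p] :
    #{e ∈ W.edges.toFinset | p e} = W.edges.countP p := by
  rw [List.countP_eq_length_filter, ← List.toFinset_card_of_nodup (hW.edges_nodup.filter _)]
  congr 1
  ext e
  simp

theorem IsTrailIn.card_filter_mem_eq_add_countP {u z : V} {W : G.Walk u z}
    (hW : W.IsTrailIn s) (v : V) :
    #{e ∈ s | v ∈ e} = #{e ∈ s \ W.edges.toFinset | v ∈ e} + W.edges.countP (v ∈ ·) := by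
  have hsub : W.edges.toFinset ⊆ s := fun e he => hW.2 e (List.mem_toFinset.mp he)
  rw [← hW.1.card_filter_toFinset_edges, ← card_union_of_disjoint
    (disjoint_filter_filter sdiff_disjoint), ← filter_union, sdiff_union_of_subset hsub]

theorem IsLongestTrailIn.count_support_add_visitBound_le {u z : V} {W : G.Walk u z}
    (hW : W.IsLongestTrailIn s) (hs : ↑s ⊆ G.edgeSet) (hnil : ¬W.Nil) (v : V) :
    W.support.count v + visitBound #{e ∈ s \ W.edges.toFinset | v ∈ e} ≤
      visitBound #{e ∈ s | v ∈ e} := by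
  have hcount := W.two_mul_count_support v
  have hdeg := hW.1.card_filter_mem_eq_add_countP v
  have hends : [u, z].count v ≤ 2 := by simpa using List.count_le_length (a := v) (l := [u, z])
  have hexhausted : 0 < [u, z].count v → #{e ∈ s \ W.edges.toFinset | v ∈ e} = 0 := by
    intro hv
    rw [card_eq_zero, filter_eq_empty_iff]
    intro e he hve
    obtain ⟨hes, heW⟩ := mem_sdiff.mp he
    refine heW (List.mem_toFinset.mpr ?_)
    rcases (by simpa using hv : v = u ∨ v = z) with rfl | rfl
    · exact hW.mem_edges_of_start_mem hs hes hve
    · exact hW.mem_edges_of_end_mem hs hes hve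
  have hvisited : 0 < W.support.count v → 0 < W.edges.countP (v ∈ ·) := by
    intro hv
    obtain ⟨e, he, hve⟩ :=
      (mem_support_iff_exists_mem_edges_of_not_nil hnil).mp (List.count_pos_iff.mp hv)
    exact List.countP_pos_iff.mpr ⟨e, he, by simpa using hve⟩
  rw [hdeg]
  unfold visitBound
  split_ifs <;> omega

end Walk

theorem exists_walk_cover_count_le_visitBound [DecidableEq V] (s : Finset (Sym2 V))
    (hs : ↑s ⊆ G.edgeSet) :
    ∃ ws : List ((u : V) × (v : V) × G.Walk u v),
      (∀ e ∈ s, ∃ w ∈ ws, e ∈ w.2.2.edges) ∧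
      ∀ v : V, (ws.map fun w => w.2.2.support.count v).sum ≤ visitBound #{e ∈ s | v ∈ e} := by
  induction s using Finset.strongInduction with
  | H s ih =>
  obtain rfl | ⟨⟨a, b⟩, hes⟩ := s.eq_empty_or_nonempty
  · exact ⟨[], by simp, by simp [visitBound]⟩
  have hedge : (Walk.cons (G.mem_edgeSet.mp (hs hes)) .nil).IsTrailIn s := ⟨by simp, by simp [hes]⟩
  obtain ⟨u, z, W, hW, hlen⟩ := Walk.exists_isLongestTrailIn_length_le hedge
  have hnil : ¬W.Nil := Walk.not_nil_iff_lt_length.mpr (lt_of_lt_of_le (by simp) hlen)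
  have hssub : s \ W.edges.toFinset ⊂ s := by
    obtain ⟨e, he, -⟩ :=
      (Walk.mem_support_iff_exists_mem_edges_of_not_nil hnil).mp W.start_mem_support
    exact sdiff_ssubset (fun e he => hW.1.2 e (List.mem_toFinset.mp he))
      ⟨e, List.mem_toFinset.mpr he⟩
  obtain ⟨ws, hcover, hcount⟩ := ih _ hssub fun e he => hs (mem_sdiff.mp he).1
  refine ⟨⟨u, z, W⟩ :: ws, fun e he => ?_, fun v => ?_⟩
  · by_cases heW : e ∈ W.edges
    · exact ⟨_, List.mem_cons_self, heW⟩
    · obtain ⟨w, hw, hew⟩ := hcover e (mem_sdiff.mpr ⟨he, by simpa using heW⟩)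
      exact ⟨w, List.mem_cons_of_mem _ hw, hew⟩
  · rw [List.map_cons, List.sum_cons]
    exact (Nat.add_le_add_left (hcount v) _).trans (hW.count_support_add_visitBound_le hs hnil v)

end SimpleGraph

/-- The folded linear arboricity of a graph with maximum degree `Δ` is at
most `⌈(Δ+1)/2⌉ = (Δ+2)/2`: the edges can be covered by walks such that every vertex
appears at most `⌈(Δ+1)/2⌉` times in total among the walks. -/
theorem folded_linear_arboricity_le {V : Type*} [Fintype V] [DecidableEq V]
    (G : SimpleGraph V) [DecidableRel G.Adj] (Δ : ℕ) (hΔ : ∀ v, G.degree v ≤ Δ) :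
    ∃ ws : List ((u : V) × (v : V) × G.Walk u v),
      (∀ e ∈ G.edgeSet, ∃ w ∈ ws, e ∈ w.2.2.edges) ∧
      (∀ v : V, (ws.map fun w => w.2.2.support.count v).sum ≤ (Δ + 2) / 2) := by
  obtain ⟨ws, hcover, hcount⟩ := G.exists_walk_cover_count_le_visitBound G.edgeFinset (by simp)
  refine ⟨ws, fun e he => hcover e (G.mem_edgeFinset.mpr he), fun v => (hcount v).trans ?_⟩
  rw [← G.incidenceFinset_eq_filter, G.card_incidenceFinset_eq_degree]
  exact SimpleGraph.visitBound_le (hΔ v)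
end

section
/- If G is a Δ-regular graph with Δ ≥ 1, then its folded linear arboricity is at least ⌈(Δ+1)/2⌉. -/
/-!
Take a vertex `v` at which some walk of the cover starts (one exists since `G` has an edge).
Each of the `Δ` edges at `v` is traversed by some walk, and each traversal uses one end of the
edge at an occurrence of `v`. An occurrence of `v` in a walk meets at most two traversed edges,
and the occurrence at the start of a walk meets at most one, so `Δ + 1 ≤ 2 · #occurrences`.
-/

namespace SimpleGraph

variable {V : Type*} [DecidableEq V] {G : SimpleGraph V}

theorem Walk.countP_mem_edges_add_ite_add_ite {u w : V} (p : G.Walk u w) (v : V) :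
    p.edges.countP (v ∈ ·) + (if v = u then 1 else 0) + (if v = w then 1 else 0) =
      2 * p.support.count v := by
  induction p with
  | @nil x =>
    obtain rfl | hvx := eq_or_ne v x
    · simp
    · simp [hvx, hvx.symm]
  | @cons a b _ hab p ih =>
    have hab_ne := hab.ne
    simp only [edges_cons, support_cons, List.countP_cons, List.count_cons, Sym2.mem_iff,
      beq_iff_eq] at ih ⊢
    split_ifs at ih ⊢ <;> grind

theorem Walk.sum_countP_mem_edges_add_countP_start_le
    (ws : List ((u : V) × (w : V) × G.Walk u w)) (v : V) :
    (ws.flatMap fun p => p.2.2.edges).countP (v ∈ ·) + ws.countP (·.1 = v) ≤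
      2 * (ws.map fun p => p.2.2.support.count v).sum := by
  induction ws with
  | nil => simp
  | cons p ws ih =>
    have hp := p.2.2.countP_mem_edges_add_ite_add_ite v
    simp only [List.flatMap_cons, List.countP_append, List.countP_cons, List.map_cons,
      List.sum_cons, decide_eq_true_eq]
    split_ifs at hp ⊢ <;> grind

theorem degree_le_countP_mem_of_incidenceSet_subset [Fintype V] [DecidableRel G.Adj]
    {v : V} {L : List (Sym2 V)} (hL : ∀ e ∈ G.incidenceSet v, e ∈ L) :
    G.degree v ≤ L.countP (v ∈ ·) := by
  rw [← card_incidenceFinset_eq_degree, List.countP_eq_length_filter]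
  refine (Finset.card_le_card fun e he => ?_).trans (List.toFinset_card_le _)
  rw [mem_incidenceFinset] at he
  simpa [he.2] using hL e he

end SimpleGraph

open SimpleGraph

/-- If `G` is a `Δ`-regular graph with `Δ ≥ 1`, then its folded linear
arboricity is at least `⌈(Δ+1)/2⌉ = (Δ+2)/2`: in every cover of the edges of `G` by
walks, some vertex appears at least `⌈(Δ+1)/2⌉` times in total among the walks. -/
theorem folded_linear_arboricity_ge_of_regular {V : Type*} [Fintype V] [DecidableEq V]
    [Nonempty V] (G : SimpleGraph V) [DecidableRel G.Adj] (Δ : ℕ)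
    (hreg : G.IsRegularOfDegree Δ) (hΔ1 : 1 ≤ Δ) :
    ∀ ws : List ((u : V) × (v : V) × G.Walk u v),
      (∀ e ∈ G.edgeSet, ∃ w ∈ ws, e ∈ w.2.2.edges) →
      ∃ v : V, (Δ + 2) / 2 ≤ (ws.map fun w => w.2.2.support.count v).sum := by
  intro ws hcov
  obtain ⟨x⟩ := ‹Nonempty V›
  obtain ⟨y, hxy⟩ := G.degree_pos_iff_exists_adj x |>.mp (hreg x ▸ hΔ1)
  obtain ⟨p, hp, -⟩ := hcov s(x, y) hxy
  refine ⟨p.1, ?_⟩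
  have hdeg : Δ ≤ (ws.flatMap fun p => p.2.2.edges).countP (p.1 ∈ ·) := by
    refine hreg p.1 ▸ degree_le_countP_mem_of_incidenceSet_subset fun e he => ?_
    obtain ⟨q, hq, hqe⟩ := hcov e he.1
    exact List.mem_flatMap.mpr ⟨q, hq, hqe⟩
  have hstart : 0 < ws.countP (·.1 = p.1) := List.countP_pos_iff.mpr ⟨p, hp, by simp⟩
  have hcount := Walk.sum_countP_mem_edges_add_countP_start_le ws p.1
  omega
end

section
/- The Petersen graph cannot be edge-covered by a collection of cycles such that every vertex lies on at most 2 of the cycles. That is, the local covering number of the Petersen graph with respect to disjoint unions of cycles is at least 3. -/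
/-- Vertices of the Petersen graph: 2-element subsets of a 5-element set. -/
def PetersenVertex : Type := {s : Finset (Fin 5) // s.card = 2}

instance : DecidableEq PetersenVertex := by unfold PetersenVertex; infer_instance

/-- The Petersen graph as the Kneser graph K(5,2). -/
def petersen : SimpleGraph PetersenVertex where
  Adj a b := Disjoint a.1 b.1
  symm := ⟨fun a b h => h.symm⟩
  loopless := by
    constructor
    intro a h
    rw [disjoint_self] at h
    have h2 := a.2
    rw [h] at h2
    simp at h2


/-!
Let every vertex lie on at most two cycles of the cover. A cycle through `v` uses exactly two of
the three edges at `v`, and every edge is used, so `v` lies on exactly two cycles and exactly one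
edge at `v` is used twice. These doubly used edges form a perfect matching `M` which every cycle
contains at each of its vertices, so half of the edges of every cycle lie in `M`.
In the Petersen graph the complement of any perfect matching is two pentagons joined by `M`;
a closed walk crosses between the pentagons an even number of times, so every cycle of the cover
has length divisible by `4`, hence equal to `8` (there are no `4`-cycles and only ten vertices).
But the lengths add up to `∑ v, 2 = 20`, which is not a multiple of `8`.
-/

open Finset SimpleGraph

namespace SimpleGraph.Walk

variable {V : Type*} {G : SimpleGraph V}

theorem even_countP_darts_ne_iff (σ : V → Bool) {u v : V} (w : G.Walk u v) :
    Even (w.darts.countP fun d => σ d.fst ≠ σ d.snd) ↔ σ u = σ v := by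
  induction w with
  | nil => simp
  | @cons u v' v h w ih =>
    rw [darts_cons, List.countP_cons, Nat.even_add, ih]
    cases σ u <;> cases σ v' <;> cases σ v <;> simp

variable [DecidableEq V] {u : V} {c : G.Walk u u}

theorem IsCycle.card_support_toFinset (hc : c.IsCycle) : c.support.toFinset.card = c.length := by
  rw [← c.cons_tail_support, List.toFinset_cons,
    Finset.insert_eq_of_mem (List.mem_toFinset.2 (c.end_mem_tail_support hc.not_nil)),
    List.toFinset_card_of_nodup hc.support_nodup, List.length_tail, c.length_support,
    Nat.add_sub_cancel]

theorem IsCycle.card_filter_mem_edges (hc : c.IsCycle) {v : V} [Fintype (G.neighborSet v)]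
    (hv : v ∈ c.support) : #{w ∈ G.neighborFinset v | s(v, w) ∈ c.edges} = 2 := by
  rw [← hc.ncard_neighborSet_toSubgraph_eq_two hv, ← Set.ncard_coe_finset]
  congr 1
  ext w
  simp only [coe_filter, mem_neighborFinset, Set.mem_ofPred_eq, Subgraph.mem_neighborSet,
    adj_toSubgraph_iff_mem_edges, and_iff_right_iff_imp]
  exact c.adj_of_mem_edges

/-- The darts of a cycle along the matching `p` cover each vertex of the cycle exactly once, either
by their first or by their second end. -/
theorem IsCycle.two_mul_countP_darts_eq_length {p : V → V} (hp : ∀ v, p v ≠ v)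
    (hinv : ∀ v, p (p v) = v) (hc : c.IsCycle) (hM : ∀ v ∈ c.support, s(v, p v) ∈ c.edges) :
    2 * c.darts.countP (fun d => d.snd = p d.fst) = c.length := by
  set D := c.darts.filter fun d => d.snd = p d.fst
  have hsub : D.Sublist c.darts := List.filter_sublist
  have hfst : (D.map (·.fst)).Nodup :=
    (c.map_fst_darts ▸ hc.nodup_dropLast_support).sublist (hsub.map _)
  have hsnd : (D.map (·.snd)).Nodup := (c.map_snd_darts ▸ hc.support_nodup).sublist (hsub.map _)
  have hD : ∀ {d}, d ∈ D ↔ d ∈ c.darts ∧ d.snd = p d.fst := by simp [D]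
  have hunion : (D.map (·.fst)).toFinset ∪ (D.map (·.snd)).toFinset = c.support.toFinset := by
    ext v
    simp only [mem_union, List.mem_toFinset, List.mem_map, hD]
    constructor
    · rintro (⟨d, ⟨hd, -⟩, rfl⟩ | ⟨d, ⟨hd, -⟩, rfl⟩)
      · exact c.dart_fst_mem_support_of_mem_darts hd
      · exact c.dart_snd_mem_support_of_mem_darts hd
    · intro hv
      obtain ⟨d, hd, he⟩ := List.mem_map.1 (hM v hv)
      rcases Sym2.eq_iff.1 he with ⟨h1, h2⟩ | ⟨h1, h2⟩
      · exact Or.inl ⟨d, ⟨hd, by rw [h1, h2]⟩, h1⟩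
      · exact Or.inr ⟨d, ⟨hd, by rw [h1, h2, hinv]⟩, h2⟩
  have hdisj : Disjoint (D.map (·.fst)).toFinset (D.map (·.snd)).toFinset := by
    simp only [Finset.disjoint_left, List.mem_toFinset, List.mem_map, hD]
    rintro v ⟨d, ⟨hd, hdp⟩, rfl⟩ ⟨d', ⟨hd', hdp'⟩, hv⟩
    have hfst' : d'.fst = p d.fst := by rw [← hv, hdp', hinv]
    have : d = d' := List.inj_on_of_nodup_map hc.edges_nodup hd hd' <| by
      change s(d.fst, d.snd) = s(d'.fst, d'.snd)
      rw [hdp, hfst', hv, Sym2.eq_swap]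
    exact hp d.fst (by rw [← hfst', this])
  rw [← hc.card_support_toFinset, ← hunion, card_union_of_disjoint hdisj,
    List.toFinset_card_of_nodup hfst, List.toFinset_card_of_nodup hsnd, List.length_map,
    List.length_map, List.countP_eq_length_filter, two_mul]

theorem IsCycle.four_dvd_length {p : V → V} (hadj : ∀ v, G.Adj v (p v)) (hinv : ∀ v, p (p v) = v)
    {σ : V → Bool} (hσ : ∀ a b, G.Adj a b → (σ a ≠ σ b ↔ b = p a)) (hc : c.IsCycle)
    (hM : ∀ v ∈ c.support, s(v, p v) ∈ c.edges) : 4 ∣ c.length := by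
  have hcross : (c.darts.countP fun d => σ d.fst ≠ σ d.snd) =
      c.darts.countP fun d => d.snd = p d.fst :=
    List.countP_congr fun d _ => by simpa using hσ _ _ d.adj
  obtain ⟨k, hk⟩ := hcross ▸ (c.even_countP_darts_ne_iff σ).2 rfl
  have := hc.two_mul_countP_darts_eq_length (fun v => (hadj v).ne.symm) hinv hM
  exact ⟨k, by omega⟩

end SimpleGraph.Walk

theorem List.sum_countP_eq_sum_map_card {ι β : Type*} (s : Finset ι) (l : List β)
    (P : ι → β → Prop) [∀ i b, Decidable (P i b)] :
    ∑ i ∈ s, l.countP (fun b => P i b) = (l.map fun b => #{i ∈ s | P i b}).sum := by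
  induction l with
  | nil => simp
  | cons b l ih =>
    simp only [List.countP_cons, sum_add_distrib, ih, List.map_cons, List.sum_cons,
      decide_eq_true_eq, sum_boole, Nat.cast_id, add_comm]

theorem List.sum_map_ite_eq_mul_countP {β : Type*} (l : List β) (P : β → Prop) [DecidablePred P]
    (k : ℕ) : (l.map fun b => if P b then k else 0).sum = k * l.countP (fun b => P b) := by
  induction l with
  | nil => simp
  | cons b l ih =>
    by_cases h : P b <;> simp [ih, h, mul_add, add_comm]

theorem List.imp_of_countP_le {α : Type*} {l : List α} {p q : α → Bool}
    (hpq : ∀ x ∈ l, p x → q x) (h : l.countP q ≤ l.countP p) : ∀ x ∈ l, q x → p x := by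
  induction l with
  | nil => simp
  | cons a l ih =>
    have hl := List.countP_mono_left fun x hx => hpq x (List.mem_cons_of_mem a hx)
    have ha : (if p a then 1 else 0) ≤ if q a then 1 else 0 := by
      have := hpq a List.mem_cons_self
      split_ifs <;> simp_all
    rw [List.countP_cons, List.countP_cons] at h
    intro x hx hqx
    rcases List.mem_cons.1 hx with rfl | hx
    · by_contra hpx
      simp [hqx, hpx] at h
      omega
    · exact ih (fun y hy => hpq y (List.mem_cons_of_mem a hy)) (by omega) x hx hqx

section CycleCover

variable {V : Type*} [DecidableEq V] {G : SimpleGraph V}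

def vertexMult (cs : List ((v : V) × G.Walk v v)) (v : V) : ℕ :=
  cs.countP fun c => v ∈ c.2.support

def edgeMult (cs : List ((v : V) × G.Walk v v)) (e : Sym2 V) : ℕ :=
  cs.countP fun c => e ∈ c.2.edges

variable {cs : List ((v : V) × G.Walk v v)}

theorem edgeMult_le_vertexMult (v w : V) : edgeMult cs s(v, w) ≤ vertexMult cs v :=
  List.countP_mono_left fun c _ => by simpa using c.2.fst_mem_support_of_mem_edges

theorem one_le_edgeMult (hcov : ∀ e ∈ G.edgeSet, ∃ c ∈ cs, e ∈ c.2.edges) {v w : V}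
    (h : G.Adj v w) : 1 ≤ edgeMult cs s(v, w) := by
  obtain ⟨c, hc, he⟩ := hcov _ (G.mem_edgeSet.2 h)
  exact List.one_le_countP_iff.2 ⟨c, hc, by simpa using he⟩

theorem sum_edgeMult_neighborFinset (hcyc : ∀ c ∈ cs, c.2.IsCycle) (v : V)
    [Fintype (G.neighborSet v)] :
    ∑ w ∈ G.neighborFinset v, edgeMult cs s(v, w) = 2 * vertexMult cs v := by
  unfold edgeMult vertexMult
  rw [List.sum_countP_eq_sum_map_card, ← List.sum_map_ite_eq_mul_countP]
  congr 1
  refine List.map_congr_left fun c hc => ?_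
  split_ifs with hv
  · exact (hcyc c hc).card_filter_mem_edges hv
  · exact card_eq_zero.2 <| filter_eq_empty_iff.2 fun w _ he =>
      hv (c.2.fst_mem_support_of_mem_edges he)

theorem sum_vertexMult [Fintype V] (hcyc : ∀ c ∈ cs, c.2.IsCycle) :
    ∑ v, vertexMult cs v = (cs.map fun c => c.2.length).sum := by
  unfold vertexMult
  rw [List.sum_countP_eq_sum_map_card]
  refine congrArg _ (List.map_congr_left fun c hc => ?_)
  rw [← (hcyc c hc).card_support_toFinset]
  congr 1
  ext
  simp

variable [Fintype V] [DecidableRel G.Adj]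

theorem vertexMult_eq_two (hG : G.IsRegularOfDegree 3) (hcyc : ∀ c ∈ cs, c.2.IsCycle)
    (hcov : ∀ e ∈ G.edgeSet, ∃ c ∈ cs, e ∈ c.2.edges) {v : V} (hv : vertexMult cs v ≤ 2) :
    vertexMult cs v = 2 := by
  have h3 : 3 ≤ ∑ w ∈ G.neighborFinset v, edgeMult cs s(v, w) := by
    calc 3 = ∑ w ∈ G.neighborFinset v, 1 := by
          rw [sum_const, card_neighborFinset_eq_degree, hG v, smul_eq_mul, mul_one]
      _ ≤ _ := sum_le_sum fun w hw => one_le_edgeMult hcov ((mem_neighborFinset _ _ _).1 hw)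
  rw [sum_edgeMult_neighborFinset hcyc] at h3
  omega

theorem existsUnique_edgeMult_eq_two (hG : G.IsRegularOfDegree 3) (hcyc : ∀ c ∈ cs, c.2.IsCycle)
    (hcov : ∀ e ∈ G.edgeSet, ∃ c ∈ cs, e ∈ c.2.edges) {v : V} (hv : vertexMult cs v ≤ 2) :
    ∃! w, G.Adj v w ∧ edgeMult cs s(v, w) = 2 := by
  have hmult : ∀ w ∈ G.neighborFinset v,
      edgeMult cs s(v, w) = 1 + if edgeMult cs s(v, w) = 2 then 1 else 0 := by
    intro w hw
    have := one_le_edgeMult hcov ((mem_neighborFinset _ _ _).1 hw)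
    have := edgeMult_le_vertexMult (cs := cs) v w
    split_ifs <;> omega
  have hsum := sum_edgeMult_neighborFinset hcyc v
  rw [vertexMult_eq_two hG hcyc hcov hv, sum_congr rfl hmult, sum_add_distrib, sum_boole,
    sum_const, card_neighborFinset_eq_degree, hG v] at hsum
  simp only [smul_eq_mul, mul_one, Nat.cast_id] at hsum
  obtain ⟨w, hw⟩ := card_eq_one.1 (show #{w ∈ G.neighborFinset v | edgeMult cs s(v, w) = 2} = 1 by
    omega)
  obtain ⟨hw, huniq⟩ := eq_singleton_iff_unique_mem.1 hw
  simp only [mem_filter, mem_neighborFinset] at hw huniq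
  exact ⟨w, hw, huniq⟩

theorem exists_matching_mem_edges (hG : G.IsRegularOfDegree 3) (hcyc : ∀ c ∈ cs, c.2.IsCycle)
    (hcov : ∀ e ∈ G.edgeSet, ∃ c ∈ cs, e ∈ c.2.edges) (hloc : ∀ v, vertexMult cs v ≤ 2) :
    ∃ p : V → V, (∀ v, G.Adj v (p v)) ∧ (∀ v, p (p v) = v) ∧
      ∀ c ∈ cs, ∀ v ∈ c.2.support, s(v, p v) ∈ c.2.edges := by
  have h := fun v => existsUnique_edgeMult_eq_two hG hcyc hcov (hloc v)
  choose p hp using fun v => (h v).exists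
  refine ⟨p, fun v => (hp v).1, fun v => (h (p v)).unique (hp (p v)) ⟨(hp v).1.symm, ?_⟩, ?_⟩
  · rw [Sym2.eq_swap]
    exact (hp v).2
  · intro c hc v hv
    have hle : vertexMult cs v ≤ edgeMult cs s(v, p v) := by
      rw [(hp v).2, vertexMult_eq_two hG hcyc hcov (hloc v)]
    simpa using List.imp_of_countP_le (fun c _ => by simpa using c.2.fst_mem_support_of_mem_edges)
      hle c hc (by simpa using hv)

end CycleCover

instance : Fintype PetersenVertex := by unfold PetersenVertex; infer_instance

instance : DecidableRel petersen.Adj := fun a b => by unfold petersen; infer_instance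

theorem card_petersenVertex : Fintype.card PetersenVertex = 10 := by decide

theorem petersen_isRegularOfDegree : petersen.IsRegularOfDegree 3 := by
  unfold SimpleGraph.IsRegularOfDegree; decide

theorem petersen_eq_or_eq_of_adj_of_adj :
    ∀ a b c d : PetersenVertex, petersen.Adj a b → petersen.Adj b c → petersen.Adj c d →
      petersen.Adj d a → a = c ∨ b = d := by
  decide

theorem petersen_cycle_length_ne_four {u : PetersenVertex} {c : petersen.Walk u u}
    (hc : c.IsCycle) : c.length ≠ 4 := by
  intro h4
  rcases c with _ | ⟨h₁, _ | ⟨h₂, _ | ⟨h₃, _ | ⟨h₄, _ | ⟨_, _⟩⟩⟩⟩⟩ <;> simp at h4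
  have := hc.support_nodup
  rcases petersen_eq_or_eq_of_adj_of_adj _ _ _ _ h₁ h₂ h₃ h₄ with rfl | rfl <;> simp at this

theorem petersen_cycle_length_eq_eight {u : PetersenVertex} {c : petersen.Walk u u}
    (hc : c.IsCycle) (h4 : 4 ∣ c.length) : c.length = 8 := by
  have hle : c.length ≤ 10 := hc.card_support_toFinset ▸ card_petersenVertex ▸ card_le_univ _
  have := hc.three_le_length
  have := petersen_cycle_length_ne_four hc
  omega

def zeroPair (i : Fin 4) : PetersenVertex :=
  ⟨{0, i.succ}, card_pair (Fin.succ_ne_zero i).symm⟩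

theorem exists_eq_zeroPair : ∀ v : PetersenVertex, 0 ∈ v.1 → ∃ i, v = zeroPair i := by
  decide

theorem petersen_eq_of_adj_of_zero_notMem : ∀ x y y' : PetersenVertex, 0 ∉ x.1 →
    petersen.Adj x y → petersen.Adj x y' → 0 ∉ y.1 → 0 ∉ y'.1 → y = y' := by
  decide

/-- A perfect matching of the Petersen graph is determined by the partners `f i` of the vertices
`{0, i + 1}`: a vertex avoiding `0` has a unique neighbour avoiding `0`, which is its partner unless
it is the partner of some `{0, i + 1}`. -/
def zeroPairMatching (f : Fin 4 → PetersenVertex) (x y : PetersenVertex) : Prop :=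
  (∃ i, x = zeroPair i ∧ y = f i) ∨ (∃ i, y = zeroPair i ∧ x = f i) ∨
    (0 ∉ x.1 ∧ 0 ∉ y.1 ∧ (∀ i, f i ≠ x ∧ f i ≠ y) ∧ petersen.Adj x y)

instance (f : Fin 4 → PetersenVertex) (x y : PetersenVertex) :
    Decidable (zeroPairMatching f x y) := by
  unfold zeroPairMatching; infer_instance

/-- The complement of a perfect matching of the Petersen graph is a pair of pentagons; this marks
the one through `{0, 1}`, as the vertices within distance two of it. -/
def zeroPairSide (f : Fin 4 → PetersenVertex) (v : PetersenVertex) : Bool :=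
  let adj x y := petersen.Adj x y ∧ ¬ zeroPairMatching f x y
  decide (v = zeroPair 0 ∨ ∃ w, adj (zeroPair 0) w ∧ (w = v ∨ adj w v))

theorem zeroPairMatching_iff {p : PetersenVertex → PetersenVertex}
    (hadj : ∀ v, petersen.Adj v (p v)) (hinv : ∀ v, p (p v) = v) {x y : PetersenVertex} :
    zeroPairMatching (p ∘ zeroPair) x y ↔ y = p x := by
  constructor
  · rintro (⟨i, rfl, rfl⟩ | ⟨i, rfl, rfl⟩ | ⟨hx, hy, hf, hxy⟩)
    · rfl
    · exact (hinv _).symm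
    refine petersen_eq_of_adj_of_zero_notMem x y (p x) hx hxy (hadj x) hy fun h0 => ?_
    obtain ⟨i, hi⟩ := exists_eq_zeroPair _ h0
    exact (hf i).1 (by rw [Function.comp_apply, ← hi, hinv])
  · rintro rfl
    by_cases hx : 0 ∈ x.1
    · obtain ⟨i, rfl⟩ := exists_eq_zeroPair x hx
      exact Or.inl ⟨i, rfl, rfl⟩
    by_cases hy : 0 ∈ (p x).1
    · obtain ⟨i, hi⟩ := exists_eq_zeroPair _ hy
      exact Or.inr (Or.inl ⟨i, hi, by rw [Function.comp_apply, ← hi, hinv]⟩)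
    refine Or.inr (Or.inr ⟨hx, hy, fun i => ⟨fun h => hy ?_, fun h => hx ?_⟩, hadj x⟩)
    · rw [← h, Function.comp_apply, hinv]
      simp [zeroPair]
    · rw [← hinv x, ← h, Function.comp_apply, hinv]
      simp [zeroPair]

theorem zeroPairSide_ne_iff (f : Fin 4 → PetersenVertex)
    (hf : ∀ i, petersen.Adj (zeroPair i) (f i))
    (hM : ∀ x, ∃! y, zeroPairMatching f x y) :
    ∀ x y, petersen.Adj x y → (zeroPairSide f x ≠ zeroPairSide f y ↔ zeroPairMatching f x y) := by
  obtain ⟨a, b, c, d, rfl⟩ : ∃ a b c d, f = ![a, b, c, d] :=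
    ⟨f 0, f 1, f 2, f 3, by ext i; fin_cases i <;> rfl⟩
  have ha : petersen.Adj (zeroPair 0) a := hf 0
  have hb : petersen.Adj (zeroPair 1) b := hf 1
  have hc : petersen.Adj (zeroPair 2) c := hf 2
  have hd : petersen.Adj (zeroPair 3) d := hf 3
  simp only [ExistsUnique] at hM
  clear hf
  revert hM; revert d; revert c; revert b; revert a
  decide +kernel

theorem petersen_exists_cut {p : PetersenVertex → PetersenVertex}
    (hadj : ∀ v, petersen.Adj v (p v)) (hinv : ∀ v, p (p v) = v) :
    ∃ σ : PetersenVertex → Bool, ∀ a b, petersen.Adj a b → (σ a ≠ σ b ↔ b = p a) := by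
  refine ⟨zeroPairSide (p ∘ zeroPair), fun a b hab => ?_⟩
  rw [zeroPairSide_ne_iff (p ∘ zeroPair) (fun i => hadj _)
    (fun x => ⟨p x, (zeroPairMatching_iff hadj hinv).2 rfl,
      fun y => (zeroPairMatching_iff hadj hinv).1⟩) a b hab, zeroPairMatching_iff hadj hinv]

/-- The Petersen graph cannot be edge-covered by a collection of cycles such
that every vertex lies on at most 2 of the cycles. -/
theorem petersen_no_local_cycle_cover_two :
    ¬ ∃ cs : List ((v : PetersenVertex) × petersen.Walk v v),
      (∀ c ∈ cs, c.2.IsCycle) ∧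
      (∀ e ∈ petersen.edgeSet, ∃ c ∈ cs, e ∈ c.2.edges) ∧
      (∀ v : PetersenVertex, (cs.countP fun c => decide (v ∈ c.2.support)) ≤ 2) := by
  rintro ⟨cs, hcyc, hcov, hloc⟩
  obtain ⟨p, hadj, hinv, hM⟩ := exists_matching_mem_edges petersen_isRegularOfDegree hcyc hcov hloc
  obtain ⟨σ, hσ⟩ := petersen_exists_cut hadj hinv
  have hlen : ∀ c ∈ cs, c.2.length = 8 := fun c hc =>
    petersen_cycle_length_eq_eight (hcyc c hc) ((hcyc c hc).four_dvd_length hadj hinv hσ (hM c hc))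
  have hsum := sum_vertexMult hcyc
  rw [sum_congr rfl fun v _ => vertexMult_eq_two petersen_isRegularOfDegree hcyc hcov (hloc v),
    List.map_congr_left hlen, List.map_const', List.sum_replicate, sum_const, card_univ,
    card_petersenVertex] at hsum
  simp only [smul_eq_mul] at hsum
  omega
end

section
/- For every graph G, the local star arboricity of G is at most the pseudoarboricity of G plus 1. -/
/-- An orientation of `G` assigns to every edge one of its endpoints (its head). -/
def IsOrientation {V : Type*} (G : SimpleGraph V) (o : Sym2 V → V) : Prop :=
  ∀ e ∈ G.edgeSet, o e ∈ e

/-- The out-degree of `v` in the orientation `o` of `G`: the number of edges at `v`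
oriented away from `v`. -/
noncomputable def outDeg {V : Type*} (G : SimpleGraph V) (o : Sym2 V → V) (v : V) : ℕ :=
  Nat.card {e : Sym2 V // e ∈ G.edgeSet ∧ v ∈ e ∧ o e ≠ v}

/-- The pseudoarboricity of `G`, expressed as the minimum over all orientations of `G`
of the maximum out-degree. -/
noncomputable def pseudoarboricity {V : Type*} (G : SimpleGraph V) : ℕ :=
  sInf {k | ∃ o : Sym2 V → V, IsOrientation G o ∧ ∀ v, outDeg G o v ≤ k}

/-- A star cover of `G`: a family of subgraphs `S i ≤ G`, each a star with center `c i`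
(every edge of `S i` contains `c i`), whose edges together cover all edges of `G`. -/
def IsStarCover {V : Type*} (G : SimpleGraph V) {m : ℕ}
    (S : Fin m → SimpleGraph V) (c : Fin m → V) : Prop :=
  (∀ i, S i ≤ G) ∧ (∀ i, ∀ e ∈ (S i).edgeSet, c i ∈ e) ∧
  (∀ e ∈ G.edgeSet, ∃ i, e ∈ (S i).edgeSet)

/-- The local star arboricity of `G`: the minimum `j` such that the edges of `G` can be
covered by stars with every vertex contained in at most `j` of the stars. -/
noncomputable def localStarArboricity {V : Type*} (G : SimpleGraph V) : ℕ :=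
  sInf {j | ∃ (m : ℕ) (S : Fin m → SimpleGraph V) (c : Fin m → V),
    IsStarCover G S c ∧ ∀ v, Nat.card {i // v ∈ (S i).support} ≤ j}

/-!
Orient `G` with maximum out-degree `p(G)` and take at every vertex `v` the star of the edges
oriented towards `v`. These stars cover `G`, and a vertex `w` lies only in its own star and in the
stars of the heads of its out-edges, hence in at most `p(G) + 1` of them.
-/

namespace SimpleGraph

variable {V : Type*} (G : SimpleGraph V)

theorem exists_isOrientation_outDeg_le_pseudoarboricity [Finite V] :
    ∃ o, IsOrientation G o ∧ ∀ v, outDeg G o v ≤ pseudoarboricity G := by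
  have hne : {k | ∃ o, IsOrientation G o ∧ ∀ v, outDeg G o v ≤ k}.Nonempty :=
    ⟨Nat.card (Sym2 V), fun e => e.out.1, fun e _ => Sym2.out_fst_mem e,
      fun _ => Finite.card_subtype_le _⟩
  exact Nat.sInf_mem hne

theorem localStarArboricity_le_of_cover {ι : Type*} [Finite ι]
    (S : ι → SimpleGraph V) (c : ι → V) (hle : ∀ i, S i ≤ G)
    (hcenter : ∀ i, ∀ e ∈ (S i).edgeSet, c i ∈ e)
    (hcover : ∀ e ∈ G.edgeSet, ∃ i, e ∈ (S i).edgeSet)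
    {j : ℕ} (hj : ∀ v, Nat.card {i // v ∈ (S i).support} ≤ j) :
    localStarArboricity G ≤ j := by
  let σ := (Finite.equivFin ι).symm
  refine Nat.sInf_le ⟨_, S ∘ σ, c ∘ σ, ⟨fun i => hle _, fun i => hcenter _, fun e he => ?_⟩,
    fun v => (Nat.card_congr (σ.subtypeEquiv fun _ => Iff.rfl)).trans_le (hj v)⟩
  obtain ⟨i, hi⟩ := hcover e he
  exact ⟨σ.symm i, by simpa using hi⟩

variable (o : Sym2 V → V)

def inStar (v : V) : SimpleGraph V :=
  fromEdgeSet {e | e ∈ G.edgeSet ∧ o e = v}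

variable {G o}

theorem mem_edgeSet_inStar {v : V} {e : Sym2 V} :
    e ∈ (G.inStar o v).edgeSet ↔ e ∈ G.edgeSet ∧ o e = v := by
  rw [inStar, edgeSet_fromEdgeSet, Set.mem_sdiff, Set.mem_ofPred_eq, and_iff_left_iff_imp]
  exact fun h => G.not_isDiag_of_mem_edgeSet h.1

theorem inStar_le (v : V) : G.inStar o v ≤ G :=
  fun _ _ h => (fromEdgeSet_adj _).1 h |>.1.1

theorem mem_of_mem_edgeSet_inStar (ho : IsOrientation G o) {v : V} {e : Sym2 V}
    (he : e ∈ (G.inStar o v).edgeSet) : v ∈ e := by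
  obtain ⟨heG, rfl⟩ := mem_edgeSet_inStar.1 he
  exact ho e heG

theorem card_inStar_support_le [Finite V] (w : V) :
    Nat.card {v // w ∈ (G.inStar o v).support} ≤ outDeg G o w + 1 := by
  have hsub : {v | w ∈ (G.inStar o v).support} ⊆
      insert w (o '' {e | e ∈ G.edgeSet ∧ w ∈ e ∧ o e ≠ w}) := by
    rintro v ⟨u, hwu⟩
    obtain ⟨he, hv⟩ := (mem_edgeSet_inStar (e := s(w, u))).1 hwu
    by_cases hvw : v = w
    · exact .inl hvw
    · exact .inr ⟨s(w, u), ⟨he, Sym2.mem_mk_left w u, hv ▸ hvw⟩, hv⟩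
  calc Nat.card {v // w ∈ (G.inStar o v).support}
      ≤ (insert w (o '' {e | e ∈ G.edgeSet ∧ w ∈ e ∧ o e ≠ w})).ncard := Set.ncard_le_ncard hsub
    _ ≤ (o '' {e | e ∈ G.edgeSet ∧ w ∈ e ∧ o e ≠ w}).ncard + 1 := Set.ncard_insert_le _ _
    _ ≤ outDeg G o w + 1 := Nat.add_le_add_right Set.ncard_image_le 1

end SimpleGraph

/-- For every graph `G`, the local star arboricity of `G` is at most the
pseudoarboricity of `G` plus 1. -/
theorem localStarArboricity_le_pseudoarboricity_succ {V : Type*} [Fintype V]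
    (G : SimpleGraph V) : localStarArboricity G ≤ pseudoarboricity G + 1 := by
  obtain ⟨o, ho, hdeg⟩ := G.exists_isOrientation_outDeg_le_pseudoarboricity
  exact G.localStarArboricity_le_of_cover (G.inStar o) id SimpleGraph.inStar_le
    (fun _ _ => SimpleGraph.mem_of_mem_edgeSet_inStar ho)
    (fun e he => ⟨o e, SimpleGraph.mem_edgeSet_inStar.2 ⟨he, rfl⟩⟩)
    fun w => (SimpleGraph.card_inStar_support_le w).trans (Nat.add_le_add_right (hdeg w) 1)
end

section
/- The local star arboricity of a graph G equals its pseudoarboricity p(G) if and only if G has an orientation with maximum out-degree p(G) in which out-degree p(G) is attained only at vertices whose degree in G equals p(G). -/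
/-!
Orient every edge towards the center of a star covering it. The out-edges at `v` then inject
into the stars through `v` (an out-edge is the edge from `v` to its star's center), and an
in-edge at `v` adds the star centered at `v`, which is not in the image. Conversely, the
in-stars of an orientation cover `G`, and `v` lies in the in-star of each of its out-neighbours
and in its own in-star only if it has an in-edge. Hence `sa_ℓ(G) = p(G)` exactly when some
orientation of maximum out-degree `p(G)` has no in-edges at the vertices of out-degree `p(G)`,
i.e. these have degree `p(G)`.
-/

theorem Nat.card_lt_card_of_injective_of_notMem {α β : Type*} [Finite β] (f : α → β)
    (hf : Function.Injective f) {b : β} (hb : b ∉ Set.range f) : Nat.card α < Nat.card β := by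
  have := Fintype.ofFinite β
  have := Fintype.ofInjective f hf
  simpa only [Nat.card_eq_fintype_card] using Fintype.card_lt_of_injective_of_notMem f hf hb

theorem SimpleGraph.mem_support_of_mem_edgeSet {V : Type*} {H : SimpleGraph V} {e : Sym2 V}
    {v : V} (he : e ∈ H.edgeSet) (hv : v ∈ e) : v ∈ H.support := by
  induction e with
  | h a b =>
    rcases Sym2.mem_iff.mp hv with rfl | rfl
    exacts [SimpleGraph.Adj.mem_support_left he, SimpleGraph.Adj.mem_support_right he]

section

variable {V : Type*} {G : SimpleGraph V} {o : Sym2 V → V}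

def IsSource (G : SimpleGraph V) (o : Sym2 V → V) (v : V) : Prop :=
  ∀ e ∈ G.edgeSet, v ∈ e → o e ≠ v

noncomputable def starLoad {m : ℕ} (S : Fin m → SimpleGraph V) (v : V) : ℕ :=
  Nat.card {i // v ∈ (S i).support}

theorem starLoad_le {m : ℕ} (S : Fin m → SimpleGraph V) (v : V) : starLoad S v ≤ m :=
  Finite.card_subtype_le _ |>.trans_eq (Nat.card_fin m)

theorem outDeg_eq_degree_iff [Fintype V] [DecidableRel G.Adj] {v : V} :
    outDeg G o v = G.degree v ↔ IsSource G o v := by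
  have hout : outDeg G o v = (G.incidenceSet v ∩ {e | o e ≠ v}).ncard := by
    rw [← Nat.card_coe_set_eq]
    exact Nat.card_congr (Equiv.subtypeEquivRight fun e => and_assoc.symm)
  have hdeg : G.degree v = (G.incidenceSet v).ncard := by
    classical
    rw [← Nat.card_coe_set_eq, Nat.card_eq_fintype_card, SimpleGraph.card_incidenceSet_eq_degree]
  rw [hout, hdeg]
  constructor
  · intro h e he hv
    have := Set.eq_of_subset_of_ncard_le Set.inter_subset_left h.ge (Set.toFinite _)
    exact Set.inter_eq_left.mp this ⟨he, hv⟩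
  · intro h
    have hsub : G.incidenceSet v ⊆ {e | o e ≠ v} := fun e he => h e he.1 he.2
    rw [Set.inter_eq_left.mpr hsub]

section StarCover

variable {m : ℕ} {S : Fin m → SimpleGraph V} {c : Fin m → V}

theorem exists_orientation_toward_covering_center
    (hcov : ∀ e ∈ G.edgeSet, ∃ i, e ∈ (S i).edgeSet) :
    ∃ o : Sym2 V → V, ∀ e ∈ G.edgeSet, ∃ i, e ∈ (S i).edgeSet ∧ c i = o e := by
  classical
  choose idx hidx using hcov
  exact ⟨fun e => if he : e ∈ G.edgeSet then c (idx e he) else e.out.1,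
    fun e he => ⟨idx e he, hidx e he, by simp only [dif_pos he]⟩⟩

theorem outDeg_le_starLoad (hcen : ∀ i, ∀ e ∈ (S i).edgeSet, c i ∈ e)
    (ho : ∀ e ∈ G.edgeSet, ∃ i, e ∈ (S i).edgeSet ∧ c i = o e) (v : V) :
    outDeg G o v ≤ starLoad S v ∧ (¬ IsSource G o v → outDeg G o v < starLoad S v) := by
  choose idx hidx hhead using ho
  let f : {e : Sym2 V // e ∈ G.edgeSet ∧ v ∈ e ∧ o e ≠ v} →
      {i // v ∈ (S i).support} :=
    fun e => ⟨idx e.1 e.2.1, SimpleGraph.mem_support_of_mem_edgeSet (hidx _ _) e.2.2.1⟩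
  have hf : Function.Injective f := by
    rintro ⟨e, he, hv, hout⟩ ⟨e', he', hv', hout'⟩ h
    have hidx_eq : idx e he = idx e' he' := congrArg Subtype.val h
    have key : ∀ e (he : e ∈ G.edgeSet), v ∈ e → o e ≠ v → e = s(v, c (idx e he)) :=
      fun e he hv hout => (Sym2.mem_and_mem_iff (hhead e he ▸ Ne.symm hout)).mp
        ⟨hv, hcen _ _ (hidx e he)⟩
    refine Subtype.ext (calc
      e = s(v, c (idx e he)) := key e he hv hout
      _ = s(v, c (idx e' he')) := by rw [hidx_eq]
      _ = e' := (key e' he' hv' hout').symm)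
  refine ⟨Nat.card_le_card_of_injective f hf, fun hsrc => ?_⟩
  obtain ⟨e₀, he₀, hv₀, hin⟩ : ∃ e ∈ G.edgeSet, v ∈ e ∧ o e = v := by
    simpa [IsSource] using hsrc
  refine Nat.card_lt_card_of_injective_of_notMem f hf
    (b := ⟨idx e₀ he₀, SimpleGraph.mem_support_of_mem_edgeSet (hidx _ _) hv₀⟩) ?_
  rintro ⟨⟨e, he, hv, hout⟩, hfe⟩
  have hidx_eq : idx e he = idx e₀ he₀ := congrArg Subtype.val hfe
  exact hout (by rw [← hhead e he, hidx_eq, hhead, hin])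

theorem IsStarCover.exists_isOrientation (hc : IsStarCover G S c) {k : ℕ}
    (hk : ∀ v, starLoad S v ≤ k) :
    ∃ o, IsOrientation G o ∧ (∀ v, outDeg G o v ≤ k) ∧
      (∀ v, outDeg G o v = k → IsSource G o v) := by
  obtain ⟨-, hcen, hcov⟩ := hc
  obtain ⟨o, ho⟩ := exists_orientation_toward_covering_center (c := c) hcov
  refine ⟨o, fun e he => ?_, fun v => ?_, fun v hv => ?_⟩
  · obtain ⟨i, hi, hhead⟩ := ho e he
    exact hhead ▸ hcen i e hi
  · exact (outDeg_le_starLoad hcen ho v).1.trans (hk v)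
  · by_contra hsrc
    exact ((outDeg_le_starLoad hcen ho v).2 hsrc).not_ge (hv ▸ hk v)

end StarCover

section InStar

def inStar (G : SimpleGraph V) (o : Sym2 V → V) (u : V) : SimpleGraph V :=
  SimpleGraph.fromEdgeSet {e | e ∈ G.edgeSet ∧ o e = u}

variable {u v : V}

theorem edgeSet_inStar : (inStar G o u).edgeSet = {e | e ∈ G.edgeSet ∧ o e = u} := by
  ext e
  rw [inStar, SimpleGraph.edgeSet_fromEdgeSet]
  exact ⟨And.left, fun h => ⟨h, G.not_isDiag_of_mem_edgeSet h.1⟩⟩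

theorem mem_support_inStar :
    v ∈ (inStar G o u).support ↔ ∃ e ∈ G.edgeSet, v ∈ e ∧ o e = u := by
  constructor
  · rintro ⟨w, hw⟩
    have hw : s(v, w) ∈ {e | e ∈ G.edgeSet ∧ o e = u} := edgeSet_inStar ▸ hw
    exact ⟨s(v, w), hw.1, Sym2.mem_mk_left v w, hw.2⟩
  · rintro ⟨e, he, hv, hoe⟩
    exact SimpleGraph.mem_support_of_mem_edgeSet (edgeSet_inStar ▸ ⟨he, hoe⟩) hv

theorem mem_support_inStar_of_ne (ho : IsOrientation G o) (hne : v ≠ u) :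
    v ∈ (inStar G o u).support ↔ s(v, u) ∈ G.edgeSet ∧ o s(v, u) = u := by
  rw [mem_support_inStar]
  constructor
  · rintro ⟨e, he, hv, hoe⟩
    obtain rfl : e = s(v, u) := (Sym2.mem_and_mem_iff hne).mp ⟨hv, hoe ▸ ho e he⟩
    exact ⟨he, hoe⟩
  · exact fun ⟨he, hoe⟩ => ⟨s(v, u), he, Sym2.mem_mk_left v u, hoe⟩

theorem IsOrientation.isStarCover_inStar (ho : IsOrientation G o) {m : ℕ} (ι : Fin m ≃ V) :
    IsStarCover G (fun i => inStar G o (ι i)) ι := by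
  refine ⟨fun i => ?_, fun i e he => ?_, fun e he => ⟨ι.symm (o e), ?_⟩⟩
  · rw [← SimpleGraph.edgeSet_subset_edgeSet, edgeSet_inStar]
    exact fun e he => he.1
  · rw [edgeSet_inStar] at he
    exact he.2 ▸ ho e he.1
  · rw [edgeSet_inStar]
    exact ⟨he, (ι.apply_symm_apply _).symm⟩

theorem IsOrientation.starLoad_inStar_le [Finite V] (ho : IsOrientation G o) {m : ℕ}
    (ι : Fin m ≃ V) (v : V) :
    starLoad (fun i => inStar G o (ι i)) v ≤ outDeg G o v + 1 ∧
      (IsSource G o v → starLoad (fun i => inStar G o (ι i)) v ≤ outDeg G o v) := by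
  classical
  let g : {i // v ∈ (inStar G o (ι i)).support} →
      Option {e : Sym2 V // e ∈ G.edgeSet ∧ v ∈ e ∧ o e ≠ v} := fun i =>
    if h : ι i.1 = v then none else
      have hedge := (mem_support_inStar_of_ne ho (Ne.symm h)).mp i.2
      some ⟨s(v, ι i.1), hedge.1, Sym2.mem_mk_left _ _, by rw [hedge.2]; exact h⟩
  have hg : Function.Injective g := by
    rintro ⟨i, hi⟩ ⟨j, hj⟩ hij
    rcases eq_or_ne (ι i) v with hi' | hi' <;> rcases eq_or_ne (ι j) v with hj' | hj'
    · exact Subtype.ext (ι.injective (hi'.trans hj'.symm))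
    · simp [g, hi', hj'] at hij
    · simp [g, hi', hj'] at hij
    · simpa [g, hi', hj'] using hij
  have hcard := Nat.card_le_card_of_injective g hg
  rw [Finite.card_option] at hcard
  refine ⟨hcard, fun hsrc => Nat.lt_succ_iff.mp ?_⟩
  have hlt := Nat.card_lt_card_of_injective_of_notMem g hg (b := none) ?_
  · rwa [Finite.card_option] at hlt
  rintro ⟨⟨i, hi⟩, hgi⟩
  by_cases hi' : ι i = v
  · obtain ⟨e, he, hv, hoe⟩ := mem_support_inStar.mp hi
    exact hsrc e he hv (hoe.trans hi')
  · simp [g, hi'] at hgi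

end InStar

theorem exists_isOrientation : ∃ o : Sym2 V → V, IsOrientation G o :=
  ⟨fun e => e.out.1, fun e _ => e.out_fst_mem⟩

variable [Finite V]

theorem localStarArboricity_le_of_isOrientation (ho : IsOrientation G o) {k : ℕ}
    (hk : ∀ v, outDeg G o v ≤ k) (hsrc : ∀ v, outDeg G o v = k → IsSource G o v) :
    localStarArboricity G ≤ k := by
  let ι := (Finite.equivFin V).symm
  refine Nat.sInf_le ⟨_, _, ι, ho.isStarCover_inStar ι, fun v => ?_⟩
  obtain ⟨hle, hle_of_src⟩ := ho.starLoad_inStar_le ι v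
  rcases (hk v).lt_or_eq with hlt | heq
  · exact hle.trans hlt
  · exact (hle_of_src (hsrc v heq)).trans heq.le

theorem exists_isStarCover_starLoad_le_localStarArboricity :
    ∃ (m : ℕ) (S : Fin m → SimpleGraph V) (c : Fin m → V),
      IsStarCover G S c ∧ ∀ v, starLoad S v ≤ localStarArboricity G := by
  obtain ⟨o, ho⟩ := exists_isOrientation (G := G)
  let ι := (Finite.equivFin V).symm
  exact Nat.sInf_mem (s := {j | ∃ (m : ℕ) (S : Fin m → SimpleGraph V) (c : Fin m → V),
    IsStarCover G S c ∧ ∀ v, starLoad S v ≤ j})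
    ⟨_, _, _, ι, ho.isStarCover_inStar ι, starLoad_le _⟩

theorem pseudoarboricity_le_localStarArboricity :
    pseudoarboricity G ≤ localStarArboricity G := by
  obtain ⟨m, S, c, hc, hload⟩ := exists_isStarCover_starLoad_le_localStarArboricity (G := G)
  obtain ⟨o, ho, hk, -⟩ := hc.exists_isOrientation hload
  exact Nat.sInf_le ⟨o, ho, hk⟩

end

/-- `sa_ℓ(G) = p(G)` if and only if `G` has an orientation with maximum
out-degree `p(G)` in which out-degree `p(G)` is attained only at vertices whose degree
in `G` equals `p(G)`. -/
theorem localStarArboricity_eq_pseudoarboricity_iff {V : Type*} [Fintype V]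
    (G : SimpleGraph V) [DecidableRel G.Adj] :
    localStarArboricity G = pseudoarboricity G ↔
      ∃ o : Sym2 V → V, IsOrientation G o ∧
        (∀ v, outDeg G o v ≤ pseudoarboricity G) ∧
        (∀ v, outDeg G o v = pseudoarboricity G → G.degree v = pseudoarboricity G) := by
  constructor
  · intro h
    obtain ⟨m, S, c, hc, hload⟩ := exists_isStarCover_starLoad_le_localStarArboricity (G := G)
    obtain ⟨o, ho, hk, hsrc⟩ := hc.exists_isOrientation (h ▸ hload)
    exact ⟨o, ho, hk, fun v hv => (outDeg_eq_degree_iff.mpr (hsrc v hv)).symm.trans hv⟩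
  · rintro ⟨o, ho, hk, hdeg⟩
    refine le_antisymm (localStarArboricity_le_of_isOrientation ho hk fun v hv => ?_)
      pseudoarboricity_le_localStarArboricity
    exact outDeg_eq_degree_iff.mp (hv.trans (hdeg v hv).symm)
end

section
/- For every graph G, the arboricity of G is at most the local star arboricity of G. -/
/-- The arboricity of `G`: the minimum number of forests needed to cover the edges
of `G`. -/
noncomputable def arboricity {V : Type*} (G : SimpleGraph V) : ℕ :=
  sInf {k | ∃ F : Fin k → SimpleGraph V,
    (∀ i, F i ≤ G ∧ (F i).IsAcyclic) ∧
    ∀ e ∈ G.edgeSet, ∃ i, e ∈ (F i).edgeSet}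

/-!
Restricted to a vertex set `U`, a star meeting `U` in `a` vertices keeps at most `a - 1` edges.
Every vertex lies in at most `j` stars and `a ≤ |U|`, so `G[U]` has at most `j (|U| - 1)` edges.
By the hard direction of Nash-Williams' theorem this bound yields `j` forests covering `G`. It is
proved by the matroid-union exchange argument: take `j` edge-disjoint forests in `G` covering as
many edges as possible. If an edge `x₀y₀` is left uncovered, the edges reachable from it by
exchanges span a vertex set `U` on which every one of the forests is connected, so `G[U]` has at
least `j (|U| - 1) + 1` edges.
-/

theorem sum_tsub_one_le_mul_tsub_one {ι : Type*} (s : Finset ι) {a : ι → ℕ} {n j : ℕ}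
    (ha : ∀ i ∈ s, a i ≤ n) (hsum : ∑ i ∈ s, a i ≤ j * n) :
    ∑ i ∈ s, (a i - 1) ≤ j * (n - 1) := by
  rcases Nat.eq_zero_or_pos n with rfl | hn
  · simpa using Finset.sum_eq_zero fun i hi => (by have := ha i hi; omega : a i - 1 = 0)
  refine Nat.le_of_mul_le_mul_left ?_ hn
  calc n * ∑ i ∈ s, (a i - 1) = ∑ i ∈ s, n * (a i - 1) := Finset.mul_sum _ _ _
    _ ≤ ∑ i ∈ s, (n - 1) * a i := Finset.sum_le_sum fun i hi => by
        rw [Nat.mul_sub_one, Nat.sub_one_mul]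
        have := ha i hi
        have : a i ≤ n * a i := Nat.le_mul_of_pos_left _ hn
        omega
    _ = (n - 1) * ∑ i ∈ s, a i := (Finset.mul_sum _ _ _).symm
    _ ≤ (n - 1) * (j * n) := Nat.mul_le_mul_left _ hsum
    _ = n * (j * (n - 1)) := by ring

open Finset in
theorem sum_ncard_inter_le_mul {α ι : Type*} [Finite α] [Fintype ι] (A : ι → Set α) (U : Set α)
    {j : ℕ} (h : ∀ v ∈ U, Nat.card {i // v ∈ A i} ≤ j) :
    ∑ i, (A i ∩ U).ncard ≤ j * U.ncard := by
  classical
  have := Fintype.ofFinite α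
  calc ∑ i, (A i ∩ U).ncard = ∑ i, #{v ∈ U.toFinset | v ∈ A i} := by
        congr! with i
        rw [Set.ncard_eq_toFinset_card']
        congr
        ext
        simp [and_comm]
    _ = ∑ v ∈ U.toFinset, #{i | v ∈ A i} :=
        Finset.sum_card_bipartiteAbove_eq_sum_card_bipartiteBelow (fun i v => v ∈ A i)
    _ ≤ ∑ v ∈ U.toFinset, j := Finset.sum_le_sum fun v hv => by
        simpa [Nat.card_eq_fintype_card, Fintype.card_subtype] using h v (by simpa using hv)
    _ = j * U.ncard := by simp [Set.ncard_eq_toFinset_card', mul_comm]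

namespace SimpleGraph

variable {V ι : Type*}

theorem ncard_edgeSet_inter_sym2_le_of_forall_mem [Finite V] {S : SimpleGraph V} {c : V}
    (hc : ∀ e ∈ S.edgeSet, c ∈ e) (U : Set V) :
    (S.edgeSet ∩ U.sym2).ncard ≤ (S.support ∩ U).ncard - 1 := by
  have hleaf : ∀ e ∈ S.edgeSet ∩ U.sym2, ∃ v, S.Adj c v ∧ c ∈ U ∧ v ∈ U ∧ e = s(c, v) := by
    rintro e ⟨he, heU⟩
    obtain ⟨v, rfl⟩ := Sym2.mem_iff_exists.1 (hc e he)
    exact ⟨v, he, heU.1, heU.2, rfl⟩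
  rcases (S.edgeSet ∩ U.sym2).eq_empty_or_nonempty with h | ⟨e₀, he₀⟩
  · simp [h]
  obtain ⟨v₀, hcv₀, hcU, -⟩ := hleaf e₀ he₀
  calc (S.edgeSet ∩ U.sym2).ncard
      ≤ ((fun v => s(c, v)) '' ((S.support ∩ U) \ {c})).ncard := by
        refine Set.ncard_le_ncard ?_ (Set.toFinite _)
        intro e he
        obtain ⟨v, hcv, -, hvU, rfl⟩ := hleaf e he
        exact ⟨v, ⟨⟨⟨c, hcv.symm⟩, hvU⟩, hcv.ne.symm⟩, rfl⟩
    _ ≤ ((S.support ∩ U) \ {c}).ncard := Set.ncard_image_le (Set.toFinite _)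
    _ = (S.support ∩ U).ncard - 1 := Set.ncard_sdiff_singleton_of_mem ⟨⟨v₀, hcv₀⟩, hcU⟩

theorem IsAcyclic.not_reachable_deleteEdges_of_mem_edges {H : SimpleGraph V} (hH : H.IsAcyclic)
    {a b : V} {p : H.Walk a b} (hp : p.IsPath) {e : Sym2 V} (he : e ∈ p.edges) :
    ¬ (H.deleteEdges {e}).Reachable a b := by
  intro hr
  obtain ⟨q, hq⟩ := hr.exists_isPath
  have hqp : q.mapLe (deleteEdges_le _) = p := congrArg Subtype.val
    ((hH.subsingleton_path a b).elim ⟨_, hq.mapLe (deleteEdges_le _)⟩ ⟨p, hp⟩)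
  rw [← hqp, Walk.edges_mapLe_eq_edges] at he
  simpa using q.edges_subset_edgeSet he

theorem connected_induce_setOf_reachable {Γ H : SimpleGraph V} (x : V)
    (h : ∀ a b, Γ.Adj a b → ∃ p : H.Walk a b, ∀ e ∈ p.edges, e ∈ Γ.edgeSet) :
    (H.induce {z | Γ.Reachable x z}).Connected := by
  classical
  set U := {z | Γ.Reachable x z}
  have hstep : ∀ a b (hab : Γ.Adj a b) (ha : a ∈ U),
      (H.induce U).Reachable ⟨a, ha⟩ ⟨b, ha.trans hab.reachable⟩ := by
    intro a b hab ha
    obtain ⟨p, hp⟩ := h a b hab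
    have hsupp : ∀ v ∈ p.support, v ∈ U := fun v hv =>
      ha.trans ((p.transfer Γ hp).takeUntil v (by rwa [Walk.support_transfer])).reachable
    exact (p.induce U hsupp).reachable
  have hwalk : ∀ a z (q : Γ.Walk a z) (ha : a ∈ U),
      (H.induce U).Reachable ⟨a, ha⟩ ⟨z, ha.trans q.reachable⟩ := by
    intro a z q
    induction q with
    | nil => exact fun _ => Reachable.refl _
    | cons hab q ih => exact fun ha => (hstep _ _ hab ha).trans (ih _)
  exact (connected_iff_exists_forall_reachable _).2
    ⟨⟨x, Reachable.refl x⟩, fun ⟨z, hz⟩ => hwalk x z hz.some _⟩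

theorem ncard_le_ncard_edgeSet_inter_sym2_add_one [Finite V] {H : SimpleGraph V} {U : Set V}
    (hU : (H.induce U).Connected) : U.ncard ≤ (H.edgeSet ∩ U.sym2).ncard + 1 := by
  have hedges : Nat.card (H.induce U).edgeSet ≤ (H.edgeSet ∩ U.sym2).ncard := by
    rw [Nat.card_coe_set_eq,
      ← Set.ncard_image_of_injective _ (Sym2.map.injective Subtype.val_injective)]
    refine Set.ncard_le_ncard ?_ (Set.toFinite _)
    rintro _ ⟨e, he, rfl⟩
    induction e with
    | h a b => exact ⟨he, a.2, b.2⟩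
  have := hU.card_vert_le_card_edgeSet_add_one
  rw [Nat.card_coe_set_eq] at this
  omega

structure IsForestPacking (G : SimpleGraph V) (F : ι → SimpleGraph V) : Prop where
  le : ∀ i, F i ≤ G
  isAcyclic : ∀ i, (F i).IsAcyclic
  pairwise_disjoint : Pairwise fun i i' => Disjoint (F i).edgeSet (F i').edgeSet

def coveredEdges (F : ι → SimpleGraph V) : Set (Sym2 V) := ⋃ i, (F i).edgeSet

def IsMaxForestPacking (G : SimpleGraph V) (F : ι → SimpleGraph V) : Prop :=
  MaximalFor (IsForestPacking G) (fun F => (coveredEdges F).ncard) F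

theorem isForestPacking_bot (G : SimpleGraph V) : IsForestPacking G fun _ : ι => ⊥ :=
  ⟨fun _ => bot_le, fun _ => isAcyclic_bot, fun _ _ _ => by simp⟩

theorem exists_isMaxForestPacking [Finite V] [Finite ι] (G : SimpleGraph V) :
    ∃ F : ι → SimpleGraph V, IsMaxForestPacking G F :=
  Set.Finite.exists_maximalFor _ {F | IsForestPacking G F} (Set.toFinite _)
    ⟨_, isForestPacking_bot G⟩

theorem IsForestPacking.sum_ncard_edgeSet_inter_lt [Finite V] [Fintype ι] {G : SimpleGraph V}
    {F : ι → SimpleGraph V} (hF : IsForestPacking G F) {s : Set (Sym2 V)} {e : Sym2 V}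
    (he : e ∈ G.edgeSet ∩ s) (hnc : e ∉ coveredEdges F) :
    ∑ i, ((F i).edgeSet ∩ s).ncard < (G.edgeSet ∩ s).ncard := by
  rw [← finsum_eq_sum_of_fintype, ← Set.ncard_iUnion_of_finite (fun _ => Set.toFinite _)
    fun i i' hii' => (hF.pairwise_disjoint hii').mono Set.inter_subset_left Set.inter_subset_left]
  refine Set.ncard_lt_ncard ((Set.ssubset_iff_of_subset ?_).2 ⟨e, he, ?_⟩)
  · exact Set.iUnion_subset fun i => Set.inter_subset_inter_left _ (edgeSet_mono (hF.le i))
  · exact fun h => hnc (Set.mem_iUnion.2 ((Set.mem_iUnion.1 h).imp fun _ => And.left))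

inductive ExchangeReach (F : ι → SimpleGraph V) (x₀ y₀ : V) : ℕ → V → V → Prop
  | base : ExchangeReach F x₀ y₀ 0 x₀ y₀
  | step {d : ℕ} {x y u w : V} (i : ι) (p : (F i).Walk x y) :
      ExchangeReach F x₀ y₀ d x y → p.IsPath → s(u, w) ∈ p.edges →
      ExchangeReach F x₀ y₀ (d + 1) u w

def exchangeGraph (F : ι → SimpleGraph V) (x₀ y₀ : V) : SimpleGraph V :=
  fromRel fun a b => ∃ d, ExchangeReach F x₀ y₀ d a b

section Exchange

variable {F : ι → SimpleGraph V} {x₀ y₀ u w : V}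

theorem exchangeGraph_adj {a b : V} : (exchangeGraph F x₀ y₀).Adj a b ↔
    a ≠ b ∧ ((∃ d, ExchangeReach F x₀ y₀ d a b) ∨ ∃ d, ExchangeReach F x₀ y₀ d b a) :=
  fromRel_adj _ _ _

theorem ExchangeReach.of_deleteEdges_le {F' : ι → SimpleGraph V} {d : ℕ} {a b : V}
    (hle : ∀ k, (F k).deleteEdges {s(u, w)} ≤ F' k)
    (hfree : ∀ d' ≤ d, ¬ ExchangeReach F x₀ y₀ d' u w) (h : ExchangeReach F x₀ y₀ d a b) :
    ExchangeReach F' x₀ y₀ d a b := by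
  induction h with
  | base => exact .base
  | @step d x y a b k p hxy hp hab ih =>
    have huw : s(u, w) ∉ p.edges := fun h => hfree (d + 1) le_rfl (.step k p hxy hp h)
    have hp' : ∀ e ∈ p.edges, e ∈ (F' k).edgeSet := fun e he => edgeSet_mono (hle k) (by
      rw [edgeSet_deleteEdges]
      exact ⟨p.edges_subset_edgeSet he, fun h => huw (h ▸ he)⟩)
    exact .step k (p.transfer _ hp') (ih fun d' hd' => hfree d' (by omega)) (hp.transfer hp')
      (by rwa [Walk.edges_transfer])

end Exchange

section MoveEdge

variable [DecidableEq ι]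

/-- In a packing `s(u, w)` lies in at most one forest, so this moves it into forest `i`. -/
def moveEdge (F : ι → SimpleGraph V) (i : ι) (u w : V) : ι → SimpleGraph V :=
  fun k => if k = i then F k ⊔ edge u w else (F k).deleteEdges {s(u, w)}

variable {G : SimpleGraph V} {F : ι → SimpleGraph V} {i : ι} {u w x₀ y₀ : V}

theorem moveEdge_self : moveEdge F i u w i = F i ⊔ edge u w := if_pos rfl

theorem moveEdge_of_ne {k : ι} (hk : k ≠ i) :
    moveEdge F i u w k = (F k).deleteEdges {s(u, w)} :=
  if_neg hk

theorem deleteEdges_le_moveEdge (k : ι) : (F k).deleteEdges {s(u, w)} ≤ moveEdge F i u w k := by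
  rcases eq_or_ne k i with rfl | hk
  · exact moveEdge_self (F := F) ▸ (deleteEdges_le _).trans le_sup_left
  · exact (moveEdge_of_ne hk).ge

theorem edgeSet_moveEdge_self (huw : u ≠ w) :
    (moveEdge F i u w i).edgeSet = insert s(u, w) (F i).edgeSet := by
  rw [moveEdge_self, edgeSet_sup, edgeSet_edge_of_ne huw, Set.union_singleton]

theorem edgeSet_moveEdge_of_ne {k : ι} (hk : k ≠ i) :
    (moveEdge F i u w k).edgeSet = (F k).edgeSet \ {s(u, w)} := by
  rw [moveEdge_of_ne hk, edgeSet_deleteEdges]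

theorem coveredEdges_moveEdge (huw : u ≠ w) :
    coveredEdges (moveEdge F i u w) = insert s(u, w) (coveredEdges F) := by
  ext e
  simp only [coveredEdges, Set.mem_iUnion, Set.mem_insert_iff]
  constructor
  · rintro ⟨k, hk⟩
    rcases eq_or_ne k i with rfl | hki
    · rw [edgeSet_moveEdge_self huw] at hk
      exact hk.imp id fun h => ⟨k, h⟩
    · rw [edgeSet_moveEdge_of_ne hki] at hk
      exact Or.inr ⟨k, hk.1⟩
  · rintro (rfl | ⟨k, hk⟩)
    · exact ⟨i, by simp [edgeSet_moveEdge_self huw]⟩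
    rcases eq_or_ne k i with rfl | hki
    · exact ⟨k, by simp [edgeSet_moveEdge_self huw, hk]⟩
    by_cases he : e = s(u, w)
    · exact ⟨i, by simp [edgeSet_moveEdge_self huw, he]⟩
    · exact ⟨k, by simp [edgeSet_moveEdge_of_ne hki, hk, he]⟩

theorem IsForestPacking.moveEdge (hF : IsForestPacking G F) (huw : G.Adj u w)
    (hnr : ¬ (F i).Reachable u w) : IsForestPacking G (moveEdge F i u w) where
  le k := by
    rcases eq_or_ne k i with rfl | hk
    · exact moveEdge_self (F := F) ▸ sup_le (hF.le k) ((edge_le_iff G).2 (Or.inr huw))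
    · exact moveEdge_of_ne hk ▸ (deleteEdges_le _).trans (hF.le k)
  isAcyclic k := by
    rcases eq_or_ne k i with rfl | hk
    · exact moveEdge_self (F := F) ▸ (hF.isAcyclic k).sup_edge_of_not_reachable hnr
    · exact moveEdge_of_ne hk ▸ (hF.isAcyclic k).anti (deleteEdges_le _)
  pairwise_disjoint k k' hkk' := by
    dsimp only
    have hmoved : ∀ {k k'}, k ≠ k' → k = i → Disjoint
        (SimpleGraph.moveEdge F i u w k).edgeSet (SimpleGraph.moveEdge F i u w k').edgeSet := by
      rintro k k' hkk' rfl
      rw [edgeSet_moveEdge_self huw.ne, edgeSet_moveEdge_of_ne hkk'.symm]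
      exact Set.disjoint_insert_left.2
        ⟨fun h => h.2 rfl, (hF.pairwise_disjoint hkk').mono_right Set.sdiff_subset⟩
    rcases eq_or_ne k i with hk | hk
    · exact hmoved hkk' hk
    rcases eq_or_ne k' i with hk' | hk'
    · exact (hmoved hkk'.symm hk').symm
    rw [edgeSet_moveEdge_of_ne hk, edgeSet_moveEdge_of_ne hk']
    exact (hF.pairwise_disjoint hkk').mono Set.sdiff_subset Set.sdiff_subset

namespace IsMaxForestPacking

theorem reachable_of_notMem_coveredEdges [Finite V] (hF : IsMaxForestPacking G F)
    (huw : G.Adj u w) (hnc : s(u, w) ∉ coveredEdges F) (i : ι) : (F i).Reachable u w := by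
  by_contra hnr
  have hcard : (coveredEdges (moveEdge F i u w)).ncard = (coveredEdges F).ncard + 1 := by
    rw [coveredEdges_moveEdge huw.ne, Set.ncard_insert_of_notMem hnc]
  have hle := hF.2 (hF.1.moveEdge huw hnr) (by simp only [hcard]; omega)
  simp only [hcard] at hle
  omega

theorem moveEdge (hF : IsMaxForestPacking G F) (hcov : s(u, w) ∈ coveredEdges F)
    (huw : G.Adj u w) (hnr : ¬ (F i).Reachable u w) :
    IsMaxForestPacking G (moveEdge F i u w) := by
  have heq : coveredEdges (SimpleGraph.moveEdge F i u w) = coveredEdges F := by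
    rw [coveredEdges_moveEdge huw.ne, Set.insert_eq_of_mem hcov]
  refine ⟨hF.1.moveEdge huw hnr, fun F' hF' hle => ?_⟩
  simp only [heq] at hle ⊢
  exact hF.2 hF' hle

/-- For a shortest counterexample, move `uw` into the forest `i` not joining its ends: the packing
stays maximal and shorter exchange chains survive the move, but the chain to the edge `xy` whose
path contained `uw` now ends at two vertices separated in forest `k`. -/
theorem reachable_of_exchangeReach [Finite V] (hF : IsMaxForestPacking G F)
    (hx₀y₀ : G.Adj x₀ y₀) (hnc : s(x₀, y₀) ∉ coveredEdges F) {d : ℕ}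
    (h : ExchangeReach F x₀ y₀ d u w) (i : ι) : (F i).Reachable u w := by
  induction d using Nat.strong_induction_on generalizing F u w i with
  | _ d ih =>
  by_contra hnr
  cases h with
  | base => exact hnr (hF.reachable_of_notMem_coveredEdges hx₀y₀ hnc i)
  | @step d x y u w k p hxy hp huw =>
    have hadj : (F k).Adj u w := p.adj_of_mem_edges huw
    have hki : k ≠ i := by rintro rfl; exact hnr hadj.reachable
    have hcov : s(u, w) ∈ coveredEdges F := Set.mem_iUnion.2 ⟨k, hadj⟩
    set F' := SimpleGraph.moveEdge F i u w
    have hF' : IsMaxForestPacking G F' := hF.moveEdge hcov (hF.1.le k hadj) hnr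
    have hnc' : s(x₀, y₀) ∉ coveredEdges F' := by
      rwa [coveredEdges_moveEdge hadj.ne, Set.insert_eq_of_mem hcov]
    have hxy' : ExchangeReach F' x₀ y₀ d x y :=
      hxy.of_deleteEdges_le deleteEdges_le_moveEdge
        fun d' hd' h' => hnr (ih d' (by omega) hF hnc h' i)
    have hsep : ¬ (F' k).Reachable x y := by
      rw [show F' k = (F k).deleteEdges {s(u, w)} from moveEdge_of_ne hki]
      exact (hF.1.isAcyclic k).not_reachable_deleteEdges_of_mem_edges hp huw
    exact hsep (ih d (by omega) hF' hnc' hxy' k)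

theorem connected_induce_exchangeGraph [Finite V] (hF : IsMaxForestPacking G F)
    (hx₀y₀ : G.Adj x₀ y₀) (hnc : s(x₀, y₀) ∉ coveredEdges F) (i : ι) :
    ((F i).induce {z | (exchangeGraph F x₀ y₀).Reachable x₀ z}).Connected := by
  have hpath : ∀ a b d, ExchangeReach F x₀ y₀ d a b →
      ∃ p : (F i).Walk a b, ∀ e ∈ p.edges, e ∈ (exchangeGraph F x₀ y₀).edgeSet := by
    intro a b d h
    obtain ⟨p, hp⟩ := (hF.reachable_of_exchangeReach hx₀y₀ hnc h i).exists_isPath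
    refine ⟨p, fun e he => ?_⟩
    induction e with
    | h c c' =>
      exact exchangeGraph_adj.2 ⟨(p.adj_of_mem_edges he).ne, Or.inl ⟨d + 1, .step i p h hp he⟩⟩
  refine connected_induce_setOf_reachable x₀ fun a b hab => ?_
  rcases (exchangeGraph_adj.1 hab).2 with ⟨d, h⟩ | ⟨d, h⟩
  · exact hpath a b d h
  · obtain ⟨p, hp⟩ := hpath b a d h
    exact ⟨p.reverse, fun e he => hp e (by simpa using he)⟩

end IsMaxForestPacking

end MoveEdge

end SimpleGraph

open SimpleGraph

theorem arboricity_le_of_forall_ncard_edgeSet_inter_sym2_le {V : Type*} [Finite V]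
    (G : SimpleGraph V) {j : ℕ}
    (hG : ∀ U : Set V, (G.edgeSet ∩ U.sym2).ncard ≤ j * (U.ncard - 1)) : arboricity G ≤ j := by
  obtain ⟨F, hF⟩ := exists_isMaxForestPacking (ι := Fin j) G
  refine Nat.sInf_le ⟨F, fun i => ⟨hF.1.le i, hF.1.isAcyclic i⟩, fun e he => ?_⟩
  by_contra! hnc
  replace hnc : e ∉ coveredEdges F := by simpa [coveredEdges] using hnc
  induction e with | h x₀ y₀ =>
  set U := {z | (exchangeGraph F x₀ y₀).Reachable x₀ z}
  have hx₀y₀ : s(x₀, y₀) ∈ U.sym2 :=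
    ⟨.refl x₀, (exchangeGraph_adj.2 ⟨he.ne, .inl ⟨0, .base⟩⟩).reachable⟩
  have hforests : j * (U.ncard - 1) ≤ ∑ i, ((F i).edgeSet ∩ U.sym2).ncard :=
    calc j * (U.ncard - 1) = ∑ _i : Fin j, (U.ncard - 1) := by simp
      _ ≤ _ := Finset.sum_le_sum fun i _ => Nat.sub_le_of_le_add <|
        ncard_le_ncard_edgeSet_inter_sym2_add_one (hF.connected_induce_exchangeGraph he hnc i)
  have hlt := hF.1.sum_ncard_edgeSet_inter_lt ⟨he, hx₀y₀⟩ hnc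
  have := hG U
  omega

theorem IsStarCover.ncard_edgeSet_inter_sym2_le {V : Type*} [Finite V] {G : SimpleGraph V}
    {m j : ℕ} {S : Fin m → SimpleGraph V} {c : Fin m → V} (hS : IsStarCover G S c)
    (hdeg : ∀ v, Nat.card {i // v ∈ (S i).support} ≤ j) (U : Set V) :
    (G.edgeSet ∩ U.sym2).ncard ≤ j * (U.ncard - 1) :=
  calc (G.edgeSet ∩ U.sym2).ncard ≤ (⋃ i, (S i).edgeSet ∩ U.sym2).ncard := by
        refine Set.ncard_le_ncard (fun e he => ?_) (Set.toFinite _)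
        obtain ⟨i, hi⟩ := hS.2.2 e he.1
        exact Set.mem_iUnion.2 ⟨i, hi, he.2⟩
    _ ≤ ∑ i, ((S i).edgeSet ∩ U.sym2).ncard := Set.ncard_iUnion_le_of_fintype _
    _ ≤ ∑ i, (((S i).support ∩ U).ncard - 1) := Finset.sum_le_sum fun i _ =>
        ncard_edgeSet_inter_sym2_le_of_forall_mem (hS.2.1 i) U
    _ ≤ j * (U.ncard - 1) := sum_tsub_one_le_mul_tsub_one _
        (fun i _ => Set.ncard_le_ncard Set.inter_subset_right (Set.toFinite _))
        (sum_ncard_inter_le_mul _ U fun v _ => hdeg v)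

theorem exists_isStarCover {V : Type*} [Fintype V] (G : SimpleGraph V) :
    ∃ (m : ℕ) (S : Fin m → SimpleGraph V) (c : Fin m → V),
      IsStarCover G S c ∧ ∀ v, Nat.card {i // v ∈ (S i).support} ≤ m := by
  let c : Fin (Fintype.card V) → V := (Fintype.equivFin V).symm
  refine ⟨_, fun i => fromEdgeSet (G.incidenceSet (c i)), c,
    ⟨fun i => ?_, fun i e he => ?_, fun e he => ?_⟩, fun v => ?_⟩
  · exact (fromEdgeSet_mono (G.incidenceSet_subset _)).trans (fromEdgeSet_edgeSet G).le
  · rw [edgeSet_fromEdgeSet] at he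
    exact he.1.2
  · induction e with | h a b =>
    refine ⟨Fintype.equivFin V a, ?_⟩
    simpa [c, incidenceSet, he] using G.ne_of_adj he
  · exact (Finite.card_subtype_le _).trans (Nat.card_fin _).le

/-- For every graph `G`, the arboricity of `G` is at most the local star
arboricity of `G`. -/
theorem arboricity_le_localStarArboricity {V : Type*} [Fintype V]
    (G : SimpleGraph V) : arboricity G ≤ localStarArboricity G := by
  obtain ⟨m, S, c, hS⟩ := exists_isStarCover G
  refine le_csInf ⟨m, m, S, c, hS⟩ ?_
  rintro j ⟨m, S, c, hS, hdeg⟩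
  exact arboricity_le_of_forall_ncard_edgeSet_inter_sym2_le G (hS.ncard_edgeSet_inter_sym2_le hdeg)
end

section
/- For every graph G, the local star arboricity of G is at most the degeneracy of G plus 1. -/
/-- An acyclic orientation: an orientation of `G` whose associated directed graph has no
directed cycle. -/
def IsAcyclicOrientation {V : Type*} (G : SimpleGraph V) (o : Sym2 V → V) : Prop :=
  IsOrientation G o ∧
  ∀ v : V, ¬ Relation.TransGen (fun a b => G.Adj a b ∧ o s(a, b) = b) v v

/-- The degeneracy of `G`: the minimum over acyclic orientations of `G` of the maximum
out-degree. -/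
noncomputable def degeneracy {V : Type*} (G : SimpleGraph V) : ℕ :=
  sInf {k | ∃ o : Sym2 V → V, IsAcyclicOrientation G o ∧ ∀ v, outDeg G o v ≤ k}

/-!
Take an orientation of `G` with all out-degrees at most `k`; one exists with `k` the
degeneracy, since an acyclic orientation is in particular an orientation. Each vertex `u` is
the centre of the star formed by the edges with head `u`. A vertex `v` lies in its own star and
otherwise only in the stars of the heads of its out-edges, hence in at most `k + 1` stars.
-/

namespace SimpleGraph

variable {V : Type*} (G : SimpleGraph V)

theorem isAcyclicOrientation_sup [LinearOrder V] : IsAcyclicOrientation G Sym2.sup := by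
  refine ⟨fun e _ ↦ ?_, fun v hv ↦ lt_irrefl v ?_⟩
  · induction e with | _ a b => rcases le_total a b with h | h <;> simp [h]
  · have step : (fun a b ↦ G.Adj a b ∧ s(a, b).sup = b) ≤ (· < ·) := by
      rintro a b ⟨hab, hsup⟩
      exact lt_of_le_of_ne (sup_eq_right.mp hsup) hab.ne
    simpa only [Relation.transGen_eq_self] using Relation.TransGen.mono step _ _ hv

theorem exists_isAcyclicOrientation : ∃ o, IsAcyclicOrientation G o :=
  letI := IsWellOrder.linearOrder (WellOrderingRel (α := V))
  ⟨_, G.isAcyclicOrientation_sup⟩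

theorem outDeg_le_card_sym2 [Finite V] (o : Sym2 V → V) (v : V) :
    outDeg G o v ≤ Nat.card (Sym2 V) :=
  Nat.card_le_card_of_injective _ Subtype.val_injective

theorem exists_isAcyclicOrientation_outDeg_le_degeneracy [Finite V] :
    ∃ o, IsAcyclicOrientation G o ∧ ∀ v, outDeg G o v ≤ degeneracy G := by
  obtain ⟨o, ho⟩ := G.exists_isAcyclicOrientation
  have hne : {k | ∃ o, IsAcyclicOrientation G o ∧ ∀ v, outDeg G o v ≤ k}.Nonempty :=
    ⟨_, o, ho, G.outDeg_le_card_sym2 o⟩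
  exact Nat.sInf_mem hne

theorem pseudoarboricity_le_degeneracy [Finite V] : pseudoarboricity G ≤ degeneracy G := by
  obtain ⟨o, ho, hdeg⟩ := G.exists_isAcyclicOrientation_outDeg_le_degeneracy
  exact Nat.sInf_le ⟨o, ho.1, hdeg⟩

def headStar (o : Sym2 V → V) (u : V) : SimpleGraph V where
  Adj a b := G.Adj a b ∧ o s(a, b) = u
  symm := ⟨fun _ _ h ↦ ⟨h.1.symm, Sym2.eq_swap ▸ h.2⟩⟩
  loopless := ⟨fun a h ↦ G.loopless.1 a h.1⟩

variable {G} {o : Sym2 V → V}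

theorem headStar_le (u : V) : G.headStar o u ≤ G := fun _ _ h ↦ h.1

theorem mem_of_mem_edgeSet_headStar (ho : IsOrientation G o) {u : V} {e : Sym2 V}
    (he : e ∈ (G.headStar o u).edgeSet) : u ∈ e := by
  induction e using Sym2.ind
  exact he.2 ▸ ho _ he.1

theorem mem_edgeSet_headStar {e : Sym2 V} (he : e ∈ G.edgeSet) :
    e ∈ (G.headStar o (o e)).edgeSet := by
  induction e using Sym2.ind
  exact ⟨he, rfl⟩

theorem card_mem_support_headStar_le [Finite V] (v : V) :
    Nat.card {u // v ∈ (G.headStar o u).support} ≤ outDeg G o v + 1 := by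
  let outEdges := {e | e ∈ G.edgeSet ∧ v ∈ e ∧ o e ≠ v}
  have hsub : {u | v ∈ (G.headStar o u).support} ⊆ insert v (o '' outEdges) := by
    rintro u ⟨w, hvw, rfl⟩
    by_cases hv : o s(v, w) = v
    · exact .inl hv
    · exact .inr ⟨s(v, w), ⟨hvw, Sym2.mem_mk_left v w, hv⟩, rfl⟩
  calc Nat.card {u // v ∈ (G.headStar o u).support}
      ≤ (insert v (o '' outEdges)).ncard := Set.ncard_le_ncard hsub
    _ ≤ (o '' outEdges).ncard + 1 := Set.ncard_insert_le _ _
    _ ≤ outDeg G o v + 1 := by gcongr; exact Set.ncard_image_le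

theorem localStarArboricity_le_of_isOrientation [Finite V] (ho : IsOrientation G o) {k : ℕ}
    (hk : ∀ v, outDeg G o v ≤ k) : localStarArboricity G ≤ k + 1 := by
  let c := (Finite.equivFin V).symm
  refine Nat.sInf_le ⟨_, fun i ↦ G.headStar o (c i), c, ⟨fun _ ↦ headStar_le _,
    fun _ _ ↦ mem_of_mem_edgeSet_headStar ho, fun e he ↦ ?_⟩, fun v ↦ ?_⟩
  · exact ⟨c.symm (o e), by simpa using mem_edgeSet_headStar he⟩
  · calc Nat.card {i // v ∈ (G.headStar o (c i)).support}
        = Nat.card {u // v ∈ (G.headStar o u).support} :=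
          Nat.card_congr (c.subtypeEquiv fun _ ↦ .rfl)
      _ ≤ outDeg G o v + 1 := card_mem_support_headStar_le v
      _ ≤ k + 1 := by gcongr; exact hk v

theorem localStarArboricity_le_pseudoarboricity_succ [Finite V] :
    localStarArboricity G ≤ pseudoarboricity G + 1 := by
  obtain ⟨o, ho, hdeg⟩ := G.exists_isOrientation_outDeg_le_pseudoarboricity
  exact localStarArboricity_le_of_isOrientation ho hdeg

end SimpleGraph

/-- For every graph `G`, the local star arboricity of `G` is at most the
degeneracy of `G` plus 1. -/
theorem localStarArboricity_le_degeneracy_succ {V : Type*} [Fintype V]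
    (G : SimpleGraph V) : localStarArboricity G ≤ degeneracy G + 1 :=
  G.localStarArboricity_le_pseudoarboricity_succ.trans
    (Nat.add_le_add_right G.pseudoarboricity_le_degeneracy 1)
end

section
/- For every graph G, the simple tree-width of G satisfies tw(G) ≤ stw(G) ≤ tw(G) + 1, where tw(G) denotes tree-width. -/
/-- The earlier neighbors of vertex `i` in a graph on `Fin n`, with respect to the
natural construction order. -/
def earlierNbrs {n : ℕ} (H : SimpleGraph (Fin n)) (i : Fin n) : Set (Fin n) :=
  {j | H.Adj i j ∧ j < i}

/-- `H` is a `k`-tree whose construction sequence is the natural order on `Fin n`: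
the first `k+1` vertices form a clique, and every later vertex is stacked onto a
`k`-clique of earlier vertices (its earlier neighborhood is a `k`-clique). -/
def IsKTreeOrder {n : ℕ} (k : ℕ) (H : SimpleGraph (Fin n)) : Prop :=
  k + 1 ≤ n ∧
  (∀ i j : Fin n, i.val < k + 1 → j.val < k + 1 → i ≠ j → H.Adj i j) ∧
  (∀ i : Fin n, k + 1 ≤ i.val →
    (earlierNbrs H i).ncard = k ∧ (earlierNbrs H i).Pairwise H.Adj)

/-- A simple `k`-tree: a `k`-tree in which no two vertices are stacked onto the same
`k`-clique. -/
def IsSimpleKTreeOrder {n : ℕ} (k : ℕ) (H : SimpleGraph (Fin n)) : Prop :=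
  IsKTreeOrder k H ∧
  ∀ i i' : Fin n, k + 1 ≤ i.val → k + 1 ≤ i'.val → i ≠ i' →
    earlierNbrs H i ≠ earlierNbrs H i'

/-- The tree-width of `G`: the minimum `k` such that `G` is a subgraph of a `k`-tree. -/
noncomputable def treeWidth {V : Type*} (G : SimpleGraph V) : ℕ :=
  sInf {k | ∃ (n : ℕ) (H : SimpleGraph (Fin n)) (f : V → Fin n),
    IsKTreeOrder k H ∧ Function.Injective f ∧ ∀ u v, G.Adj u v → H.Adj (f u) (f v)}

/-- The simple tree-width of `G`: the minimum `k` such that `G` is a subgraph of a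
simple `k`-tree. -/
noncomputable def simpleTreeWidth {V : Type*} (G : SimpleGraph V) : ℕ :=
  sInf {k | ∃ (n : ℕ) (H : SimpleGraph (Fin n)) (f : V → Fin n),
    IsSimpleKTreeOrder k H ∧ Function.Injective f ∧ ∀ u v, G.Adj u v → H.Adj (f u) (f v)}

/-! Every `k`-tree `H` on `Fin n` is a subgraph of a simple `(k+1)`-tree: for `n = k + 1` take the
complete graph on `k + 2` vertices. Otherwise keep the first `k + 2` vertices as a clique and stack
every later vertex `i` onto its old `k`-clique `C` plus one apex: the largest earlier `w ∉ C` that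
is already adjacent to all of `C` in the graph built so far. Such a `w` exists because `H` is a
`k`-tree. If two vertices `a < b` were stacked onto the same clique, then `a` itself would be a
candidate apex for `b`, larger than the apex chosen for `b`. -/

variable {n k : ℕ} {H : SimpleGraph (Fin n)}

theorem Fin.ncard_setOf_val_lt {m : ℕ} (h : m ≤ n) : {u : Fin n | u.val < m}.ncard = m := by
  rw [← Fin.range_castLE h, ← Nat.card_coe_set_eq,
    Nat.card_range_of_injective (Fin.castLE_injective _), Nat.card_eq_fintype_card,
    Fintype.card_fin]

theorem IsKTreeOrder.exists_lt_forall_adj (hH : IsKTreeOrder k H) {i : Fin n}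
    (hi : k + 1 ≤ i.val) :
    ∃ v < i, v ∉ earlierNbrs H i ∧ ∀ u ∈ earlierNbrs H i, H.Adj v u := by
  obtain ⟨hcard, hclique⟩ := hH.2.2 i hi
  set C := earlierNbrs H i
  by_cases hbase : ∀ u ∈ C, u.val < k + 1
  · obtain ⟨v, hv, hvC⟩ : ∃ v ∈ {u : Fin n | u.val < k + 1}, v ∉ C :=
      Set.exists_mem_notMem_of_ncard_lt_ncard (by rw [Fin.ncard_setOf_val_lt hH.1, hcard]; omega)
    refine ⟨v, Fin.lt_def.mpr (by simp only [Set.mem_ofPred_eq] at hv; omega), hvC,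
      fun u hu => hH.2.1 v u hv (hbase u hu) ?_⟩
    rintro rfl
    exact hvC hu
  · push Not at hbase
    obtain ⟨u₀, hu₀C, hu₀⟩ := hbase
    obtain ⟨m, hmC, hmax⟩ := Set.exists_max_image C id C.toFinite ⟨u₀, hu₀C⟩
    have hm : k + 1 ≤ m.val := hu₀.trans (hmax u₀ hu₀C)
    obtain ⟨hcardm, hcliquem⟩ := hH.2.2 m hm
    have hsub : C \ {m} ⊆ earlierNbrs H m := fun u ⟨huC, hum⟩ =>
      ⟨hclique hmC huC (Ne.symm hum), lt_of_le_of_ne (hmax u huC) hum⟩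
    have hk : k ≠ 0 := hcard ▸ Set.ncard_ne_zero_of_mem hmC
    obtain ⟨v, hvm, hv⟩ : ∃ v ∈ earlierNbrs H m, v ∉ C \ {m} :=
      Set.exists_mem_notMem_of_ncard_lt_ncard
        (by rw [Set.ncard_sdiff_singleton_of_mem hmC, hcard, hcardm]; omega)
    have hvC : v ∉ C := fun hvC => hv ⟨hvC, hvm.2.ne⟩
    refine ⟨v, hvm.2.trans hmC.2, hvC, fun u hu => ?_⟩
    by_cases hum : u = m
    · exact hum ▸ hvm.1.symm
    · exact hcliquem hvm (hsub ⟨hu, hum⟩) (fun h => hvC (h ▸ hu))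

open Classical in
noncomputable def apexCands (C : Set (Fin n)) (N : Fin n → Set (Fin n)) (i : Fin n) :
    Finset (Fin n) :=
  {w | w < i ∧ w ∉ C ∧ ∀ u ∈ C, w ∈ N u ∨ u ∈ N w}

theorem apexCands_congr {C : Set (Fin n)} {N N' : Fin n → Set (Fin n)} {i : Fin n}
    (hC : C ⊆ Set.Iio i) (hN : ∀ j < i, N j = N' j) : apexCands C N i = apexCands C N' i := by
  ext w
  simp only [apexCands, Finset.mem_filter_univ]
  refine and_congr_right fun hw => and_congr_right fun _ => forall₂_congr fun u hu => ?_
  rw [hN w hw, hN u (hC hu)]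

/-- The guard `j < i` only serves the termination proof. `(apexCands ..).max` is `⊥` only if
there is no candidate, which cannot happen when `H` is a `k`-tree. -/
noncomputable def simpleLiftNbrs (H : SimpleGraph (Fin n)) (k : ℕ) (i : Fin n) : Set (Fin n) :=
  if i.val < k + 2 then Set.Iio i
  else earlierNbrs H i ∪
    {v | (apexCands (earlierNbrs H i) (fun j => if j < i then simpleLiftNbrs H k j else ∅) i).max
      = v}
termination_by i

noncomputable def simpleLift (H : SimpleGraph (Fin n)) (k : ℕ) : SimpleGraph (Fin n) :=
  SimpleGraph.fromRel fun u v => v ∈ simpleLiftNbrs H k u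

theorem simpleLiftNbrs_of_lt {i : Fin n} (hi : i.val < k + 2) :
    simpleLiftNbrs H k i = Set.Iio i := by
  rw [simpleLiftNbrs, if_pos hi]

theorem earlierNbrs_subset_Iio (i : Fin n) : earlierNbrs H i ⊆ Set.Iio i := fun _ hj => hj.2

theorem simpleLiftNbrs_of_le {i : Fin n} (hi : k + 2 ≤ i.val) :
    simpleLiftNbrs H k i =
      earlierNbrs H i ∪ {v | (apexCands (earlierNbrs H i) (simpleLiftNbrs H k) i).max = v} := by
  rw [simpleLiftNbrs, if_neg (by omega),
    apexCands_congr (earlierNbrs_subset_Iio i) fun j hj => if_pos hj]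

theorem apexCands_subset_Iio {C : Set (Fin n)} {N : Fin n → Set (Fin n)} {i w : Fin n}
    (hw : w ∈ apexCands C N i) : w < i := by
  simp only [apexCands, Finset.mem_filter_univ] at hw
  exact hw.1

theorem simpleLiftNbrs_subset_Iio (i : Fin n) : simpleLiftNbrs H k i ⊆ Set.Iio i := by
  by_cases hi : i.val < k + 2
  · rw [simpleLiftNbrs_of_lt hi]
  · rw [simpleLiftNbrs_of_le (by omega)]
    rintro v (hv | hv)
    · exact hv.2
    · exact apexCands_subset_Iio (Finset.mem_of_max hv)

theorem simpleLift_adj_of_lt {u v : Fin n} (h : v < u) :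
    (simpleLift H k).Adj u v ↔ v ∈ simpleLiftNbrs H k u := by
  rw [simpleLift, SimpleGraph.fromRel_adj,
    or_iff_left fun hu => (simpleLiftNbrs_subset_Iio v hu).not_gt h]
  exact and_iff_right h.ne'

theorem earlierNbrs_simpleLift (i : Fin n) :
    earlierNbrs (simpleLift H k) i = simpleLiftNbrs H k i := by
  ext j
  exact ⟨fun ⟨hadj, hj⟩ => (simpleLift_adj_of_lt hj).mp hadj,
    fun hj => ⟨(simpleLift_adj_of_lt (simpleLiftNbrs_subset_Iio i hj)).mpr hj,
      simpleLiftNbrs_subset_Iio i hj⟩⟩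

theorem earlierNbrs_subset_simpleLiftNbrs (i : Fin n) :
    earlierNbrs H i ⊆ simpleLiftNbrs H k i := by
  by_cases hi : i.val < k + 2
  · rw [simpleLiftNbrs_of_lt hi]
    exact earlierNbrs_subset_Iio i
  · rw [simpleLiftNbrs_of_le (by omega)]
    exact Set.subset_union_left

theorem le_simpleLift : H ≤ simpleLift H k := by
  intro u v huv
  rcases lt_or_gt_of_ne huv.ne with h | h
  · exact ((simpleLift_adj_of_lt h).mpr
      (earlierNbrs_subset_simpleLiftNbrs v ⟨huv.symm, h⟩)).symm
  · exact (simpleLift_adj_of_lt h).mpr (earlierNbrs_subset_simpleLiftNbrs u ⟨huv, h⟩)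

theorem mem_apexCands_simpleLift {i w : Fin n} :
    w ∈ apexCands (earlierNbrs H i) (simpleLiftNbrs H k) i ↔
      w < i ∧ w ∉ earlierNbrs H i ∧ ∀ u ∈ earlierNbrs H i, (simpleLift H k).Adj u w := by
  simp only [apexCands, Finset.mem_filter_univ, simpleLift, SimpleGraph.fromRel_adj]
  refine and_congr_right fun _ => and_congr_right fun hw => forall₂_congr fun u hu => ?_
  exact (and_iff_right fun (h : u = w) => hw (h ▸ hu)).symm

theorem IsKTreeOrder.exists_simpleLiftNbrs_eq_insert (hH : IsKTreeOrder k H) {i : Fin n}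
    (hi : k + 2 ≤ i.val) :
    ∃ v : Fin n, (apexCands (earlierNbrs H i) (simpleLiftNbrs H k) i).max = v ∧
      simpleLiftNbrs H k i = insert v (earlierNbrs H i) := by
  obtain ⟨w, hwi, hwC, hwadj⟩ := hH.exists_lt_forall_adj (i := i) (by omega)
  have hw : w ∈ apexCands (earlierNbrs H i) (simpleLiftNbrs H k) i :=
    mem_apexCands_simpleLift.mpr ⟨hwi, hwC, fun u hu => le_simpleLift (hwadj u hu).symm⟩
  obtain ⟨v, hv⟩ := Finset.max_of_nonempty ⟨w, hw⟩
  refine ⟨v, hv, ?_⟩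
  rw [simpleLiftNbrs_of_le hi, hv, Set.union_comm, Set.insert_eq]
  simp only [WithBot.coe_inj, Set.ofPred_eq_eq_singleton']

theorem IsKTreeOrder.isKTreeOrder_simpleLift (hH : IsKTreeOrder k H) (hn : k + 2 ≤ n) :
    IsKTreeOrder (k + 1) (simpleLift H k) := by
  refine ⟨hn, fun i j hi hj hij => ?_, fun i hi => ?_⟩
  · rcases lt_or_gt_of_ne hij with h | h
    · exact ((simpleLift_adj_of_lt h).mpr (by rw [simpleLiftNbrs_of_lt hj]; exact h)).symm
    · exact (simpleLift_adj_of_lt h).mpr (by rw [simpleLiftNbrs_of_lt hi]; exact h)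
  obtain ⟨v, hv, hN⟩ := hH.exists_simpleLiftNbrs_eq_insert hi
  obtain ⟨hvi, hvC, hvadj⟩ := mem_apexCands_simpleLift.mp (Finset.mem_of_max hv)
  obtain ⟨hcard, hclique⟩ := hH.2.2 i (by omega)
  rw [earlierNbrs_simpleLift, hN]
  refine ⟨by rw [Set.ncard_insert_of_notMem hvC, hcard], ?_⟩
  exact (hclique.mono' fun _ _ => (le_simpleLift ·)).insert
    fun u hu _ => ⟨(hvadj u hu).symm, hvadj u hu⟩

theorem simpleLiftNbrs_ne (hH : IsKTreeOrder k H) {a b : Fin n} (hab : a < b)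
    (hb : k + 2 ≤ b.val) : simpleLiftNbrs H k a ≠ simpleLiftNbrs H k b := by
  intro heq
  obtain ⟨v, hv, hN⟩ := hH.exists_simpleLiftNbrs_eq_insert hb
  have hva : v < a := simpleLiftNbrs_subset_Iio a (heq ▸ hN ▸ Set.mem_insert v _)
  have ha : a ∈ apexCands (earlierNbrs H b) (simpleLiftNbrs H k) b := by
    refine mem_apexCands_simpleLift.mpr ⟨hab, fun haC => ?_, fun u hu => ?_⟩
    · exact lt_irrefl a
        (simpleLiftNbrs_subset_Iio a (heq ▸ earlierNbrs_subset_simpleLiftNbrs b haC))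
    · have hua : u ∈ simpleLiftNbrs H k a := heq ▸ earlierNbrs_subset_simpleLiftNbrs b hu
      exact ((simpleLift_adj_of_lt (simpleLiftNbrs_subset_Iio a hua)).mpr hua).symm
  exact (Finset.le_max_of_eq ha hv).not_gt hva

theorem IsKTreeOrder.isSimpleKTreeOrder_simpleLift (hH : IsKTreeOrder k H) (hn : k + 2 ≤ n) :
    IsSimpleKTreeOrder (k + 1) (simpleLift H k) := by
  refine ⟨hH.isKTreeOrder_simpleLift hn, fun i i' hi hi' hne => ?_⟩
  rw [earlierNbrs_simpleLift, earlierNbrs_simpleLift]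
  rcases lt_or_gt_of_ne hne with h | h
  · exact simpleLiftNbrs_ne hH h hi'
  · exact (simpleLiftNbrs_ne hH h hi).symm

theorem isSimpleKTreeOrder_top (k : ℕ) : IsSimpleKTreeOrder k (⊤ : SimpleGraph (Fin (k + 1))) :=
  ⟨⟨le_rfl, fun _ _ _ _ hij => hij, fun i hi => absurd i.isLt (by omega)⟩,
    fun i _ hi _ _ => absurd i.isLt (by omega)⟩

theorem top_adj_of_injective {V W : Type*} (G : SimpleGraph V) {f : V → W}
    (hf : Function.Injective f) (u v : V) (h : G.Adj u v) : (⊤ : SimpleGraph W).Adj (f u) (f v) :=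
  hf.ne h.ne

theorem IsKTreeOrder.exists_isSimpleKTreeOrder_succ (hH : IsKTreeOrder k H) :
    ∃ (m : ℕ) (H' : SimpleGraph (Fin m)) (g : Fin n → Fin m),
      IsSimpleKTreeOrder (k + 1) H' ∧ Function.Injective g ∧
      ∀ u v, H.Adj u v → H'.Adj (g u) (g v) := by
  by_cases hn : k + 2 ≤ n
  · exact ⟨n, simpleLift H k, id, hH.isSimpleKTreeOrder_simpleLift hn, Function.injective_id,
      fun _ _ h => le_simpleLift h⟩
  · have hinj := Fin.castLE_injective (show n ≤ k + 2 by omega)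
    exact ⟨k + 2, ⊤, _, isSimpleKTreeOrder_top (k + 1), hinj, top_adj_of_injective H hinj⟩

theorem exists_isSimpleKTreeOrder_embedding {V : Type*} [Finite V] (G : SimpleGraph V) :
    ∃ (k n : ℕ) (H : SimpleGraph (Fin n)) (f : V → Fin n), IsSimpleKTreeOrder k H ∧
      Function.Injective f ∧ ∀ u v, G.Adj u v → H.Adj (f u) (f v) := by
  have hinj := (Fin.castSucc_injective _).comp (Finite.equivFin V).injective
  exact ⟨_, _, ⊤, _, isSimpleKTreeOrder_top (Nat.card V), hinj, top_adj_of_injective G hinj⟩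

theorem exists_isSimpleKTreeOrder_simpleTreeWidth {V : Type*} [Finite V] (G : SimpleGraph V) :
    ∃ (n : ℕ) (H : SimpleGraph (Fin n)) (f : V → Fin n),
      IsSimpleKTreeOrder (simpleTreeWidth G) H ∧ Function.Injective f ∧
      ∀ u v, G.Adj u v → H.Adj (f u) (f v) :=
  Nat.sInf_mem (exists_isSimpleKTreeOrder_embedding G)

theorem exists_isKTreeOrder_treeWidth {V : Type*} [Finite V] (G : SimpleGraph V) :
    ∃ (n : ℕ) (H : SimpleGraph (Fin n)) (f : V → Fin n), IsKTreeOrder (treeWidth G) H ∧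
      Function.Injective f ∧ ∀ u v, G.Adj u v → H.Adj (f u) (f v) := by
  obtain ⟨k, n, H, f, hH, hf, hGH⟩ := exists_isSimpleKTreeOrder_embedding G
  exact Nat.sInf_mem (⟨k, n, H, f, hH.1, hf, hGH⟩ : ∃ (k n : ℕ) (H : SimpleGraph (Fin n))
    (f : V → Fin n), IsKTreeOrder k H ∧ Function.Injective f ∧
      ∀ u v, G.Adj u v → H.Adj (f u) (f v))

/-- For every graph `G`, `tw(G) ≤ stw(G) ≤ tw(G) + 1`. -/
theorem treeWidth_le_simpleTreeWidth_le_succ {V : Type*} [Fintype V]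
    (G : SimpleGraph V) :
    treeWidth G ≤ simpleTreeWidth G ∧ simpleTreeWidth G ≤ treeWidth G + 1 := by
  obtain ⟨n, H, f, hH, hf, hGH⟩ := exists_isSimpleKTreeOrder_simpleTreeWidth G
  refine ⟨Nat.sInf_le ⟨n, H, f, hH.1, hf, hGH⟩, ?_⟩
  obtain ⟨n, H, f, hH, hf, hGH⟩ := exists_isKTreeOrder_treeWidth G
  obtain ⟨m, H', g, hH', hg, hHH'⟩ := hH.exists_isSimpleKTreeOrder_succ
  exact Nat.sInf_le ⟨m, H', g ∘ f, hH', hg.comp hf, fun u v h => hHH' _ _ (hGH u v h)⟩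
end

section
/- Let G be a graph containing an induced complete bipartite subgraph with parts A (|A| = m) and B (|B| = n), and let φ be a cover of G by caterpillar forests in which every vertex of A has at most s preimages. Let ψ be the restriction of φ obtained by deleting all edges between A and B. Then at least n − 2sm vertices b ∈ B satisfy |ψ⁻¹(b)| ≤ |φ⁻¹(b)| − m. -/
/-- A vertex is internal in `C` if it has at least two distinct neighbors. -/
def Internal {W : Type*} (C : SimpleGraph W) (x : W) : Prop :=
  ∃ p q, p ≠ q ∧ C.Adj x p ∧ C.Adj x q

/-- A caterpillar forest: a forest each of whose components is a caterpillar, i.e. its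
non-leaf vertices form a path. Equivalently, the graph is acyclic and no vertex has
three distinct internal neighbors. -/
def IsCaterpillarForest {W : Type*} (C : SimpleGraph W) : Prop :=
  C.IsAcyclic ∧ ∀ u a b c, C.Adj u a → C.Adj u b → C.Adj u c →
    a ≠ b → a ≠ c → b ≠ c → ¬(Internal C a ∧ Internal C b ∧ Internal C c)

/-!
Fix `a ∈ A`. Every edge `ab` with `b ∈ B` is covered; call `b` good for `a` if some covering
edge has a leaf over `b`. If `b` is bad, the edge is covered by an edge from a preimage `w` of
`a` to an internal (spline) vertex over `b`. A vertex of a caterpillar has at most two spline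
neighbours, so there are at most `2 |φ⁻¹(a)| ≤ 2s` bad `b`, and at most `2sm` vertices of `B` are
bad for some `a ∈ A`. For every other `b ∈ B`, the leaves over `b` covering the edges `ab`,
`a ∈ A`, are `m` distinct preimages of `b` whose only edge is deleted in `ψ`.
-/

open Finset

theorem Finset.card_sub_mul_le_card_filter_forall {α β : Type*} [DecidableEq β]
    (A : Finset α) (B : Finset β) (P : β → α → Prop) [∀ b a, Decidable (P b a)] {k : ℕ}
    (h : ∀ a ∈ A, #{b ∈ B | ¬P b a} ≤ k) :
    #B - k * #A ≤ #{b ∈ B | ∀ a ∈ A, P b a} := by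
  have hbad : {b ∈ B | ¬∀ a ∈ A, P b a} ⊆ A.biUnion fun a => {b ∈ B | ¬P b a} := by
    intro b hb
    simp only [mem_filter, not_forall] at hb
    obtain ⟨hbB, a, ha, hPa⟩ := hb
    exact mem_biUnion.mpr ⟨a, ha, mem_filter.mpr ⟨hbB, hPa⟩⟩
  have hbad_card : #{b ∈ B | ¬∀ a ∈ A, P b a} ≤ k * #A :=
    calc #{b ∈ B | ¬∀ a ∈ A, P b a}
      _ ≤ ∑ a ∈ A, #{b ∈ B | ¬P b a} := (card_le_card hbad).trans card_biUnion_le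
      _ ≤ ∑ _a ∈ A, k := sum_le_sum h
      _ = k * #A := by rw [sum_const, smul_eq_mul, mul_comm]
  have := card_filter_add_card_filter_not (s := B) (fun b => ∀ a ∈ A, P b a)
  omega

section Caterpillar

variable {W : Type*} {C : SimpleGraph W}

theorem eq_of_adj_of_not_internal {x y y' : W} (hx : ¬Internal C x) (hy : C.Adj x y)
    (hy' : C.Adj x y') : y = y' := by
  by_contra hne
  exact hx ⟨y, y', hne, hy, hy'⟩

theorem IsCaterpillarForest.card_internal_neighbors_le_two (hC : IsCaterpillarForest C)
    (u : W) : Nat.card {y // C.Adj u y ∧ Internal C y} ≤ 2 := by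
  by_contra! h
  have : Finite {y // C.Adj u y ∧ Internal C y} := Nat.finite_of_card_ne_zero (by omega)
  have := Fintype.ofFinite {y // C.Adj u y ∧ Internal C y}
  rw [Nat.card_eq_fintype_card] at h
  obtain ⟨⟨a, ha⟩, ⟨b, hb⟩, ⟨c, hc⟩, hab, hac, hbc⟩ := Fintype.two_lt_card_iff.mp h
  exact hC.2 u a b c ha.1 hb.1 hc.1 (by simpa using hab) (by simpa using hac)
    (by simpa using hbc) ⟨ha.2, hb.2, hc.2⟩

end Caterpillar

section Cover

variable {ι : Type*} {W : ι → Type*} (C : ∀ i, SimpleGraph (W i)) {V : Type*}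
  (φ : (Σ i, W i) → V)

def CoversEdge (b a : V) : Prop :=
  ∃ x : Σ i, W i, φ x = b ∧ ∃ y, (C x.1).Adj x.2 y ∧ φ ⟨x.1, y⟩ = a

/-- `φ` covers the edge `ba` by an edge whose end over `b` is a leaf. -/
def CoversEdgeAtLeaf (b a : V) : Prop :=
  ∃ x : Σ i, W i, ¬Internal (C x.1) x.2 ∧ φ x = b ∧ ∃ y, (C x.1).Adj x.2 y ∧ φ ⟨x.1, y⟩ = a

variable {C φ}

theorem coversEdge_of_adj {G : SimpleGraph V}
    (hsurj : ∀ e ∈ G.edgeSet, ∃ (i : ι) (a b : W i), (C i).Adj a b ∧ e = s(φ ⟨i, a⟩, φ ⟨i, b⟩))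
    {a b : V} (hab : G.Adj a b) : CoversEdge C φ b a := by
  obtain ⟨i, x, y, hxy, he⟩ := hsurj s(a, b) hab
  rcases Sym2.eq_iff.mp he with ⟨hx, hy⟩ | ⟨hx, hy⟩
  · exact ⟨⟨i, y⟩, hy.symm, x, hxy.symm, hx.symm⟩
  · exact ⟨⟨i, x⟩, hy.symm, y, hxy, hx.symm⟩

theorem mem_range_of_coversEdge_of_not_coversEdgeAtLeaf {a b : V} (h : CoversEdge C φ b a)
    (hleaf : ¬CoversEdgeAtLeaf C φ b a) :
    b ∈ Set.range fun p : Σ w : {w // φ w = a},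
      {y // (C w.1.1).Adj w.1.2 y ∧ Internal (C w.1.1) y} => φ ⟨p.1.1.1, p.2.1⟩ := by
  obtain ⟨⟨i, x⟩, hx, y, hxy, hy⟩ := h
  have hint : Internal (C i) x := by
    by_contra hI
    exact hleaf ⟨⟨i, x⟩, hI, hx, y, hxy, hy⟩
  exact ⟨⟨⟨⟨i, y⟩, hy⟩, ⟨x, hxy.symm, hint⟩⟩, hx⟩

theorem card_filter_not_coversEdgeAtLeaf_le [Finite (Σ i, W i)]
    [∀ b a, Decidable (CoversEdgeAtLeaf C φ b a)] (hC : ∀ i, IsCaterpillarForest (C i))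
    (B : Finset V) {a : V} (hcov : ∀ b ∈ B, CoversEdge C φ b a) :
    #{b ∈ B | ¬CoversEdgeAtLeaf C φ b a} ≤ 2 * Nat.card {x // φ x = a} := by
  have (i : ι) : Finite (W i) := Finite.of_injective _ sigma_mk_injective
  have := Fintype.ofFinite {x // φ x = a}
  calc #{b ∈ B | ¬CoversEdgeAtLeaf C φ b a}
    _ = (({b ∈ B | ¬CoversEdgeAtLeaf C φ b a} : Finset V) : Set V).ncard :=
        (Set.ncard_coe_finset _).symm
    _ ≤ (Set.range _).ncard := Set.ncard_le_ncard
        (fun b hb => by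
          obtain ⟨hbB, hleaf⟩ := mem_filter.mp hb
          exact mem_range_of_coversEdge_of_not_coversEdgeAtLeaf (hcov b hbB) hleaf)
        (Set.finite_range _)
    _ ≤ Nat.card (Σ w : {w // φ w = a}, {y // (C w.1.1).Adj w.1.2 y ∧ Internal (C w.1.1) y}) :=
        (Nat.card_coe_set_eq _).symm.trans_le (Finite.card_range_le _)
    _ = ∑ w : {w // φ w = a}, Nat.card {y // (C w.1.1).Adj w.1.2 y ∧ Internal (C w.1.1) y} :=
        Nat.card_sigma
    _ ≤ ∑ _w : {w // φ w = a}, 2 :=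
        sum_le_sum fun w _ => (hC w.1.1).card_internal_neighbors_le_two w.1.2
    _ = 2 * Nat.card {x // φ x = a} := by
        rw [sum_const, card_univ, smul_eq_mul, mul_comm, Nat.card_eq_fintype_card]

theorem card_fiber_add_card_le [Finite (Σ i, W i)] {A B : Finset V} {b : V} (hb : b ∈ B)
    (hleaf : ∀ a ∈ A, CoversEdgeAtLeaf C φ b a) :
    Nat.card {x : (i : ι) × W i // φ x = b ∧
        ∃ y : W x.1, (C x.1).Adj x.2 y ∧
          ¬((φ x ∈ A ∧ φ ⟨x.1, y⟩ ∈ B) ∨ (φ x ∈ B ∧ φ ⟨x.1, y⟩ ∈ A))} + #A ≤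
      Nat.card {x : (i : ι) × W i // φ x = b} := by
  choose p hp_leaf hp_b hp_nbr using fun a : A => hleaf a.1 a.2
  let f : A → {x // φ x = b} := fun a => ⟨p a, hp_b a⟩
  let g : {x : (i : ι) × W i // φ x = b ∧
        ∃ y : W x.1, (C x.1).Adj x.2 y ∧
          ¬((φ x ∈ A ∧ φ ⟨x.1, y⟩ ∈ B) ∨ (φ x ∈ B ∧ φ ⟨x.1, y⟩ ∈ A))} → {x // φ x = b} :=
    Subtype.map id fun _ hx => hx.1
  have hf : Function.Injective f := by
    intro a a' h
    have hp : p a = p a' := congrArg Subtype.val h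
    obtain ⟨y, hy, hya⟩ := hp_nbr a
    obtain ⟨y', hy', hya'⟩ := hp ▸ hp_nbr a'
    rw [eq_of_adj_of_not_internal (hp_leaf a) hy hy'] at hya
    exact Subtype.ext (hya.symm.trans hya')
  have hg : Function.Injective g := Subtype.map_injective _ Function.injective_id
  -- the only edge at the leaf `p a` goes from `B` to `A`, so `p a` is not a preimage under `ψ`
  have hfg : ∀ x a, g x ≠ f a := by
    intro ⟨x, _, y', hy', hcross⟩ a h
    have hp : x = p a := congrArg Subtype.val h
    subst hp
    obtain ⟨y, hy, hya⟩ := hp_nbr a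
    rw [eq_of_adj_of_not_internal (hp_leaf a) hy' hy, hya, hp_b a] at hcross
    exact hcross (Or.inr ⟨hb, a.2⟩)
  have := Nat.card_le_card_of_injective _ (hg.sumElim hf hfg)
  rwa [Nat.card_sum, Nat.card_eq_fintype_card (α := A), Fintype.card_coe] at this

end Cover

theorem caterpillar_cover_lemma_general {V : Type*} (G : SimpleGraph V)
    (A B : Finset V) (m n : ℕ) (hA : A.card = m) (hB : B.card = n)
    (hbip : ∀ a ∈ A, ∀ b ∈ B, G.Adj a b)
    {ι : Type*} (W : ι → Type*) (C : ∀ i, SimpleGraph (W i))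
    [Finite ((i : ι) × W i)]
    (hcat : ∀ i, IsCaterpillarForest (C i))
    (φ : ((i : ι) × W i) → V)
    (hsurj : ∀ e ∈ G.edgeSet, ∃ (i : ι) (a b : W i),
      (C i).Adj a b ∧ e = s(φ ⟨i, a⟩, φ ⟨i, b⟩))
    (s : ℕ) (hs : ∀ a ∈ A, Nat.card {x : (i : ι) × W i // φ x = a} ≤ s) :
    n - 2 * s * m ≤
      {b : V | b ∈ B ∧
        Nat.card {x : (i : ι) × W i // φ x = b ∧
          ∃ y : W x.1, (C x.1).Adj x.2 y ∧
            ¬((φ x ∈ A ∧ φ ⟨x.1, y⟩ ∈ B) ∨ (φ x ∈ B ∧ φ ⟨x.1, y⟩ ∈ A))} + m ≤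
        Nat.card {x : (i : ι) × W i // φ x = b}}.ncard := by
  classical
  subst hA hB
  have hbad (a) (ha : a ∈ A) : #{b ∈ B | ¬CoversEdgeAtLeaf C φ b a} ≤ 2 * s :=
    (card_filter_not_coversEdgeAtLeaf_le hcat B
      fun b hb => coversEdge_of_adj hsurj (hbip a ha b hb)).trans (Nat.mul_le_mul_left 2 (hs a ha))
  calc #B - 2 * s * #A
    _ ≤ #{b ∈ B | ∀ a ∈ A, CoversEdgeAtLeaf C φ b a} :=
        card_sub_mul_le_card_filter_forall A B _ hbad
    _ = (({b ∈ B | ∀ a ∈ A, CoversEdgeAtLeaf C φ b a} : Finset V) : Set V).ncard :=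
        (Set.ncard_coe_finset _).symm
    _ ≤ _ := Set.ncard_le_ncard
        (fun b hb => by
          obtain ⟨hbB, hleaf⟩ := mem_filter.mp hb
          exact ⟨hbB, card_fiber_add_card_le hbB hleaf⟩)
        (B.finite_toSet.subset fun _ hb => hb.1)

/-- Let `G` contain an induced complete bipartite subgraph with parts `A`
(of size `m`) and `B` (of size `n`), and let `φ` be a cover of `G` by caterpillar
forests (an edge-surjective homomorphism from a disjoint union of caterpillar forests
to `G`) in which every vertex of `A` has at most `s` preimages. Let `ψ` be the
restriction of `φ` obtained by deleting all edges between `A` and `B` (a preimage of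
`b` survives in `ψ` iff it is incident to an edge not mapped to an `A`–`B` edge). Then
at least `n - 2sm` vertices `b ∈ B` satisfy `|ψ⁻¹(b)| ≤ |φ⁻¹(b)| - m`. -/
theorem caterpillar_cover_lemma {V : Type*} [Fintype V] (G : SimpleGraph V)
    (A B : Finset V) (m n : ℕ) (hA : A.card = m) (hB : B.card = n)
    (hAB : Disjoint A B)
    (hbip : ∀ a ∈ A, ∀ b ∈ B, G.Adj a b)
    (hindA : ∀ a ∈ A, ∀ a' ∈ A, ¬ G.Adj a a')
    (hindB : ∀ b ∈ B, ∀ b' ∈ B, ¬ G.Adj b b')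
    {ι : Type*} (W : ι → Type*) (C : ∀ i, SimpleGraph (W i))
    [Finite ((i : ι) × W i)]
    (hcat : ∀ i, IsCaterpillarForest (C i))
    (φ : ((i : ι) × W i) → V)
    (hhom : ∀ (i : ι) (a b : W i), (C i).Adj a b → G.Adj (φ ⟨i, a⟩) (φ ⟨i, b⟩))
    (hsurj : ∀ e ∈ G.edgeSet, ∃ (i : ι) (a b : W i),
      (C i).Adj a b ∧ e = s(φ ⟨i, a⟩, φ ⟨i, b⟩))
    (s : ℕ) (hs : ∀ a ∈ A, Nat.card {x : (i : ι) × W i // φ x = a} ≤ s) :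
    n - 2 * s * m ≤
      {b : V | b ∈ B ∧
        Nat.card {x : (i : ι) × W i // φ x = b ∧
          ∃ y : W x.1, (C x.1).Adj x.2 y ∧
            ¬((φ x ∈ A ∧ φ ⟨x.1, y⟩ ∈ B) ∨ (φ x ∈ B ∧ φ ⟨x.1, y⟩ ∈ A))} + m ≤
        Nat.card {x : (i : ι) × W i // φ x = b}}.ncard :=
  caterpillar_cover_lemma_general G A B m n hA hB hbip W C hcat φ hsurj s hs
end
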